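/- arXiv:2104.09296 — 9 statements merged into one kernel-verified Lean document; each statement's English description precedes it below -/
import Mathlib

section
/- Let B be a Boolean ring and let Q be a commutative ring containing B as a subring such that for every q ∈ Q there exists a right ideal E of B, essential as a B-submodule of B, with qE ⊆ B, and such that for q ∈ Q, qE = 0 for some essential right ideal E of B implies q = 0. Then Q is a Boolean ring, i.e., q² = q for every q ∈ Q. -/
/-- `N` is an essential submodule of `P`: `N ≤ P` and `N` has nonzero intersection with
every nonzero submodule of `P`. -/
def Submodule.EssentialIn {R M : Type*} [Ring R] [AddCommGroup M] [Module R M]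
    (N P : Submodule R M) : Prop :=
  N ≤ P ∧ ∀ X : Submodule R M, X ≤ P → X ≠ ⊥ → X ⊓ N ≠ ⊥

theorem IsIdempotentElem.mul_self_sub_mul_eq_zero {R : Type*} [CommRing R] {q x : R}
    (hx : IsIdempotentElem x) (hqx : IsIdempotentElem (q * x)) : (q * q - q) * x = 0 := by
  linear_combination hqx.eq - q * q * hx.eq

/-- Let `B` be a Boolean ring contained as a subring in a commutative ring `Q` such that
every `q ∈ Q` satisfies `qE ⊆ B` for some right ideal `E` of `B` that is essential as a
`B`-submodule of `B`, and such that any `q ∈ Q` annihilating an essential right ideal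
of `B` is zero.  Then `Q` is a Boolean ring: `q² = q` for every `q ∈ Q`.
(Right ideals of `B` are `(↥B)ᵐᵒᵖ`-submodules of `B`.) -/
theorem boolean_of_quotient_ring_of_boolean
    (Q : Type*) [CommRing Q] (B : Subring Q)
    (hB : ∀ x : ↥B, x * x = x)
    (hdense : ∀ q : Q, ∃ E : Submodule (↥B)ᵐᵒᵖ ↥B,
      E.EssentialIn ⊤ ∧ ∀ x : ↥B, x ∈ E → q * (x : Q) ∈ B)
    (hfaithful : ∀ q : Q, ∀ E : Submodule (↥B)ᵐᵒᵖ ↥B,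
      E.EssentialIn ⊤ → (∀ x : ↥B, x ∈ E → q * (x : Q) = 0) → q = 0) :
    ∀ q : Q, q * q = q := by
  have hidem : ∀ x : ↥B, IsIdempotentElem (x : Q) := fun x => congrArg Subtype.val (hB x)
  intro q
  obtain ⟨E, hE, hEB⟩ := hdense q
  refine sub_eq_zero.mp (hfaithful _ E hE fun x hx => ?_)
  exact (hidem x).mul_self_sub_mul_eq_zero (hidem ⟨_, hEB x hx⟩)
end

section
/- Every Boolean ring B, considered as a right module over itself, is pseudo injective (auto-invariant): every injective B-module homomorphism from a right ideal of B into B extends to a B-module endomorphism of B. -/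
/-- A module `M` over a ring `S` is *pseudo injective* (auto-invariant) if every injective
`S`-module homomorphism from a submodule `N` of `M` into `M` extends to an `S`-module
endomorphism of `M`. -/
def IsPseudoInjective (S M : Type*) [Ring S] [AddCommGroup M] [Module S M] : Prop :=
  ∀ (N : Submodule S M) (f : N →ₗ[S] M), Function.Injective f →
    ∃ g : M →ₗ[S] M, ∀ x : N, g (x : M) = f x

/-!
Every injective homomorphism `f` from a right ideal `N` of a Boolean ring `B` into `B` is the
inclusion, so the identity extends it. For `x ∈ N` put `c = f x`. Linearity and `x = x x` give
`c = c x`, and `f (x c) = c c = c = f x`, so `x c = x` by injectivity; commutativity then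
gives `x = c`.
-/

namespace BooleanRing

variable {B : Type*} [BooleanRing B] {N : Submodule Bᵐᵒᵖ B}

theorem linearMap_apply_mul_self (f : N →ₗ[Bᵐᵒᵖ] B) (x : N) : f x * x = f x := by
  have hx : MulOpposite.op (x : B) • x = x := Subtype.ext (mul_self (x : B))
  calc f x * x = f (MulOpposite.op (x : B) • x) := by rw [f.map_smul, op_smul_eq_mul]
    _ = f x := by rw [hx]

theorem self_mul_apply_of_injective {f : N →ₗ[Bᵐᵒᵖ] B} (hf : Function.Injective f) (x : N) :
    (x : B) * f x = x := by
  have h : f (MulOpposite.op (f x) • x) = f x := by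
    rw [f.map_smul, op_smul_eq_mul, mul_self]
  exact congrArg Subtype.val (hf h)

theorem apply_eq_of_injective {f : N →ₗ[Bᵐᵒᵖ] B} (hf : Function.Injective f) (x : N) :
    f x = x := by
  rw [← linearMap_apply_mul_self f x, mul_comm, self_mul_apply_of_injective hf]

end BooleanRing

/-- Every Boolean ring `B`, viewed as a right module over itself (i.e. as a module over
`Bᵐᵒᵖ`), is pseudo injective: every injective `B`-module homomorphism from a right ideal
of `B` into `B` extends to a `B`-module endomorphism of `B`. -/
theorem booleanRing_isPseudoInjective (B : Type*) [BooleanRing B] :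
    IsPseudoInjective Bᵐᵒᵖ B :=
  fun _ _ hf => ⟨LinearMap.id, fun x => (BooleanRing.apply_eq_of_injective hf x).symm⟩
end

section
/- Let B be the Boolean ring of finite and cofinite subsets of the natural numbers ℕ, with symmetric difference as addition and intersection as multiplication. Then B is a commutative von Neumann regular ring that is not CS: there exists a right ideal of B that is not essential in any direct summand of B. -/
/-- A ring `R` is von Neumann regular if for every `a ∈ R` there is `b ∈ R`
with `a = a * b * a`. -/
def IsVonNeumannRegularRing (R : Type*) [Ring R] : Prop :=
  ∀ a : R, ∃ b : R, a = a * b * a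

open scoped symmDiff in
/-- The Boolean ring of finite and cofinite subsets of `ℕ`:  a subring of
`AsBoolRing (Set ℕ)`, the Boolean ring of all subsets of `ℕ` in which addition is
symmetric difference and multiplication is intersection. -/
def finCofin : Subring (AsBoolRing (Set ℕ)) where
  carrier := {s : AsBoolRing (Set ℕ) |
    (ofBoolRing s).Finite ∨ (ofBoolRing s)ᶜ.Finite}
  zero_mem' := by
    simp only [Set.mem_setOf_eq, ofBoolRing_zero]
    exact Or.inl Set.finite_empty
  one_mem' := by
    simp only [Set.mem_setOf_eq, ofBoolRing_one]
    exact Or.inr (by rw [Set.top_eq_univ, Set.compl_univ]; exact Set.finite_empty)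
  neg_mem' := by
    intro a ha
    simpa only [Set.mem_setOf_eq, ofBoolRing_neg] using ha
  add_mem' := by
    rintro a b (ha | ha) (hb | hb) <;>
      simp only [Set.mem_setOf_eq, ofBoolRing_add] <;>
      [exact Or.inl ((ha.union hb).subset symmDiff_le_sup);
       refine Or.inr ((ha.union hb).subset ?_);
       refine Or.inr ((hb.union ha).subset ?_);
       refine Or.inl ((ha.union hb).subset ?_)] <;>
      · intro x hx
        simp only [Set.mem_compl_iff, Set.mem_symmDiff, Set.mem_union] at hx ⊢
        tauto
  mul_mem' := by
    rintro a b (ha | ha) (hb | hb) <;>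
      simp only [Set.mem_setOf_eq, ofBoolRing_mul]
    · exact Or.inl (ha.subset Set.inter_subset_left)
    · exact Or.inl (ha.subset Set.inter_subset_left)
    · exact Or.inl (hb.subset Set.inter_subset_right)
    · refine Or.inr ((ha.union hb).subset ?_)
      intro x hx
      simp only [Set.mem_compl_iff, Set.mem_inter_iff, Set.mem_union,
        Set.inf_eq_inter] at hx ⊢
      tauto

/-!
Let `S` be a set of naturals such that `S` and `Sᶜ` are both infinite (e.g. the even numbers),
and `I` the ideal of elements of `finCofin` contained in `S`. A direct summand of a ring is
generated by an idempotent `e`; if it contains `I`, then `e ⊇ S`, so `e` is infinite, hence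
cofinite, and therefore contains some `m ∉ S`. The nonzero ideal generated by `{m}` then lies
in the summand but meets `I` trivially.
-/

open scoped symmDiff

theorem isVonNeumannRegularRing_of_forall_isIdempotentElem {R : Type*} [Ring R]
    (h : ∀ a : R, IsIdempotentElem a) : IsVonNeumannRegularRing R :=
  fun a => ⟨a, by rw [h a, h a]⟩

theorem Submodule.exists_mul_eq_of_isCompl {R : Type*} [Ring R] {D D' : Submodule Rᵐᵒᵖ R}
    (hD : IsCompl D D') : ∃ e ∈ D, ∀ x ∈ D, e * x = x := by
  obtain ⟨e, he, f, hf, hef⟩ := Submodule.mem_sup.mp (hD.sup_eq_top ▸ Submodule.mem_top (x := 1))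
  refine ⟨e, he, fun x hx => ?_⟩
  have hx_eq : e * x + f * x = x := by rw [← add_mul, hef, one_mul]
  have hfx : f * x ∈ D ⊓ D' := by
    refine ⟨?_, D'.smul_mem (MulOpposite.op x) hf⟩
    rw [eq_sub_of_add_eq' hx_eq]
    exact D.sub_mem hx (D.smul_mem (MulOpposite.op x) he)
  rw [hD.inf_eq_bot, Submodule.mem_bot] at hfx
  rwa [hfx, add_zero] at hx_eq

namespace finCofin

def toSet (x : finCofin) : Set ℕ := ofBoolRing (x : AsBoolRing (Set ℕ))

theorem toSet_injective : Function.Injective toSet :=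
  fun _ _ h => Subtype.ext (ofBoolRing.injective h)

@[simp] theorem toSet_zero : toSet 0 = ∅ := rfl

@[simp] theorem toSet_mul (x y : finCofin) : toSet (x * y) = toSet x ∩ toSet y := rfl

@[simp] theorem toSet_add (x y : finCofin) : toSet (x + y) = toSet x ∆ toSet y := rfl

theorem finite_or_finite_compl_toSet (x : finCofin) : (toSet x).Finite ∨ (toSet x)ᶜ.Finite :=
  x.2

theorem isIdempotentElem (x : finCofin) : IsIdempotentElem x :=
  toSet_injective (Set.inter_self _)

def single (m : ℕ) : finCofin := ⟨toBoolRing {m}, Or.inl (Set.finite_singleton m)⟩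

@[simp] theorem toSet_single (m : ℕ) : toSet (single m) = {m} := rfl

theorem single_ne_zero (m : ℕ) : single m ≠ 0 :=
  fun h => Set.singleton_ne_empty m (by simpa using congrArg toSet h)

theorem mul_single_eq_self_iff {x : finCofin} {m : ℕ} : x * single m = single m ↔ m ∈ toSet x := by
  rw [← toSet_injective.eq_iff, toSet_mul, toSet_single, Set.inter_eq_right,
    Set.singleton_subset_iff]

def idealOf (S : Set ℕ) : Submodule finCofinᵐᵒᵖ finCofin where
  carrier := {x | toSet x ⊆ S}
  zero_mem' := by simp
  add_mem' {a b} ha hb := by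
    simp only [Set.mem_ofPred_eq, toSet_add] at ha hb ⊢
    exact symmDiff_le_sup.trans (Set.union_subset ha hb)
  smul_mem' c x hx := by
    simp only [Set.mem_ofPred_eq, MulOpposite.smul_eq_mul_unop, toSet_mul] at hx ⊢
    exact Set.inter_subset_left.trans hx

theorem mem_idealOf {S : Set ℕ} {x : finCofin} : x ∈ idealOf S ↔ toSet x ⊆ S := Iff.rfl

theorem span_singleton_single_inf_idealOf_eq_bot {S : Set ℕ} {m : ℕ} (hm : m ∉ S) :
    Submodule.span finCofinᵐᵒᵖ {single m} ⊓ idealOf S = ⊥ := by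
  refine eq_bot_iff.mpr fun y hy => (Submodule.mem_bot _).mpr (toSet_injective ?_)
  obtain ⟨hy, hyS⟩ := Submodule.mem_inf.mp hy
  obtain ⟨r, rfl⟩ := Submodule.mem_span_singleton.mp hy
  rw [mem_idealOf, MulOpposite.smul_eq_mul_unop, toSet_mul, toSet_single] at hyS
  rw [MulOpposite.smul_eq_mul_unop, toSet_mul, toSet_single, toSet_zero,
    Set.eq_empty_iff_forall_notMem]
  exact fun n hn => hm (hn.1 ▸ hyS hn)

theorem not_essentialIn_idealOf {S : Set ℕ} (hS : S.Infinite) (hSc : Sᶜ.Infinite)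
    {D D' : Submodule finCofinᵐᵒᵖ finCofin} (hD : IsCompl D D') :
    ¬ (idealOf S).EssentialIn D := by
  rintro ⟨hSD, hess⟩
  obtain ⟨e, he, hmul⟩ := Submodule.exists_mul_eq_of_isCompl hD
  have hSe : S ⊆ toSet e := fun n hn =>
    mul_single_eq_self_iff.mp (hmul _ (hSD (by simpa [mem_idealOf] using hn)))
  have hcofinite : (toSet e)ᶜ.Finite :=
    (finite_or_finite_compl_toSet e).resolve_left fun hfin => hS (hfin.subset hSe)
  obtain ⟨m, hmS, hme⟩ : ∃ m ∉ S, m ∈ toSet e := by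
    by_contra! h
    exact hSc (hcofinite.subset h)
  have hmD : single m ∈ D := by
    rw [← mul_single_eq_self_iff.mpr hme]
    exact D.smul_mem (MulOpposite.op (single m)) he
  refine hess _ ((Submodule.span_singleton_le_iff_mem _ _).mpr hmD) ?_
    (span_singleton_single_inf_idealOf_eq_bot hmS)
  exact (Submodule.span_singleton_eq_bot.not).mpr (single_ne_zero m)

end finCofin

theorem Nat.infinite_setOf_even : {n : ℕ | Even n}.Infinite :=
  Set.infinite_of_forall_exists_gt fun a => ⟨2 * a + 2, ⟨a + 1, by ring⟩, by omega⟩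

theorem Nat.infinite_setOf_not_even : {n : ℕ | Even n}ᶜ.Infinite :=
  Set.infinite_of_forall_exists_gt fun a =>
    ⟨2 * a + 1, Nat.not_even_iff_odd.mpr (odd_two_mul_add_one a), by omega⟩

/-- The Boolean ring `finCofin` of finite and cofinite subsets of `ℕ` (with symmetric
difference as addition and intersection as multiplication) is a commutative von Neumann
regular ring which is not CS: it has a right ideal that is not essential in any direct
summand of the ring (as a right module over itself, i.e. over `(finCofin)ᵐᵒᵖ`). -/
theorem finCofin_comm_vnr_not_CS :
    (∀ x y : finCofin, x * y = y * x) ∧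
    IsVonNeumannRegularRing finCofin ∧
    ∃ I : Submodule (↥finCofin)ᵐᵒᵖ ↥finCofin,
      ∀ D : Submodule (↥finCofin)ᵐᵒᵖ ↥finCofin,
        (∃ D' : Submodule (↥finCofin)ᵐᵒᵖ ↥finCofin, IsCompl D D') → ¬I.EssentialIn D :=
  ⟨mul_comm, isVonNeumannRegularRing_of_forall_isIdempotentElem finCofin.isIdempotentElem,
    finCofin.idealOf {n | Even n}, fun _ ⟨_, hD⟩ =>
      finCofin.not_essentialIn_idealOf Nat.infinite_setOf_even Nat.infinite_setOf_not_even hD⟩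
end

section
/- Let Q = ∏_{i ∈ ℝ} F_i, where F_i = 𝔽₂ for every real number i, and let R be the 𝔽₂-subalgebra of Q generated by 1 and the set J = {x ∈ Q | x_i = 0 for all but countably many i ∈ ℝ}. Then R is a Boolean ring, and R is not CS: there exists a right ideal of R that is not essential in any direct summand of R. -/
/-- The `𝔽₂`-subalgebra `R` of `Q = ∏_{i ∈ ℝ} 𝔽₂` generated by `1` and the set
`J = {x ∈ Q | xᵢ = 0 for all but countably many i ∈ ℝ}`. -/
def countableSupportSubalgebra : Subalgebra (ZMod 2) (ℝ → ZMod 2) :=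
  Algebra.adjoin (ZMod 2)
    ({1} ∪ {x : ℝ → ZMod 2 | Set.Countable {i : ℝ | x i ≠ 0}})

/-!
Every element of `R` is eventually constant along the cocountable filter on `ℝ`, so it agrees
with `0` or with `1` off a countable set. For `I` take the elements of `R` supported in
`(-∞, 0)`. If `D ⊕ D' = R`, writing `1 = e + f` with `e ∈ D`, `f ∈ D'` gives `e * d = d` for all
`d ∈ D`. If `e` is cocountably `0`, it vanishes at some `i < 0`, and the point mass `δᵢ ∈ I` is not
fixed by `e`, so `I ⊄ D`. If `e` is cocountably `1`, it equals `1` at some `i ≥ 0`, so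
`δᵢ = e δᵢ ∈ D`, while `δᵢ R` is supported in `{i}` and hence meets `I` only in `0`.
-/

open Filter Function

section EventuallyConst

variable (K : Type*) {ι A : Type*} [CommSemiring K] [Semiring A] [Algebra K A]

def Filter.eventuallyConstSubalgebra (l : Filter ι) : Subalgebra K (ι → A) where
  carrier := {x | l.EventuallyConst x}
  mul_mem' := EventuallyConst.mul
  add_mem' := EventuallyConst.add
  algebraMap_mem' c := EventuallyConst.const (algebraMap K A c)

end EventuallyConst

theorem Filter.Eventually.exists_mem_of_not_countable {ι : Type*} {p : ι → Prop}
    (h : ∀ᶠ i in cocountable, p i) {s : Set ι} (hs : ¬s.Countable) : ∃ i ∈ s, p i := by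
  by_contra! hp
  exact hs ((mem_cocountable.1 h).mono fun i hi => hp i hi)

theorem Real.not_countable_of_Ioo_subset {s : Set ℝ} {a b : ℝ} (hab : a < b)
    (h : Set.Ioo a b ⊆ s) : ¬s.Countable :=
  fun hs => (Cardinal.Real.Ioo_countable_iff.1 (hs.mono h)).not_gt hab

theorem Submodule.exists_mul_eq_self_of_isCompl {R : Type*} [Ring R] {D D' : Submodule Rᵐᵒᵖ R}
    (h : IsCompl D D') : ∃ e ∈ D, ∀ d ∈ D, e * d = d := by
  obtain ⟨e, he, f, hf, hef⟩ := mem_sup.1 (h.sup_eq_top ▸ mem_top : (1 : R) ∈ D ⊔ D')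
  refine ⟨e, he, fun d hd => ?_⟩
  have hfd : f * d = d - e * d := by rw [eq_sub_iff_add_eq, ← add_mul, add_comm, hef, one_mul]
  have hfd_mem : f * d ∈ D ⊓ D' :=
    ⟨hfd ▸ D.sub_mem hd (D.smul_mem (MulOpposite.op d) he), D'.smul_mem (MulOpposite.op d) hf⟩
  rw [h.inf_eq_bot, mem_bot, hfd, sub_eq_zero] at hfd_mem
  exact hfd_mem.symm

section SupportedIn

variable {K ι : Type*} [CommSemiring K] (A : Subalgebra K (ι → K))

def Subalgebra.supportedIn (S : Set ι) : Submodule Aᵐᵒᵖ A where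
  carrier := {x | support (x : ι → K) ⊆ S}
  add_mem' hx hy := (support_add _ _).trans (Set.union_subset hx hy)
  zero_mem' := by simp
  smul_mem' _ _ hx := (support_mul_subset_left _ _).trans hx

theorem Subalgebra.supportedIn_inf (S T : Set ι) :
    A.supportedIn S ⊓ A.supportedIn T = A.supportedIn (S ∩ T) := by
  ext x
  exact Set.subset_inter_iff.symm

theorem Subalgebra.supportedIn_empty : A.supportedIn ∅ = ⊥ :=
  eq_bot_iff.2 fun _ hx =>
    (Submodule.mem_bot _).2 (Subtype.ext (support_eq_empty_iff.1 (Set.subset_empty_iff.1 hx)))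

end SupportedIn

namespace CountableSupportSubalgebra

theorem le_eventuallyConstSubalgebra :
    countableSupportSubalgebra ≤ eventuallyConstSubalgebra (A := ZMod 2) (ZMod 2) cocountable := by
  refine Algebra.adjoin_le ?_
  rintro x (rfl | hx)
  · exact EventuallyConst.const 1
  · exact eventuallyConst_iff_exists_eventuallyEq.2 ⟨0, mem_cocountable.2 hx⟩

theorem eventuallyEq_zero_or_one (x : countableSupportSubalgebra) :
    (x : ℝ → ZMod 2) =ᶠ[cocountable] 0 ∨ (x : ℝ → ZMod 2) =ᶠ[cocountable] 1 := by
  obtain ⟨c, hc⟩ := eventuallyConst_iff_exists_eventuallyEq.1 (le_eventuallyConstSubalgebra x.2)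
  fin_cases c
  exacts [Or.inl hc, Or.inr hc]

noncomputable def single (i : ℝ) : countableSupportSubalgebra :=
  ⟨Pi.single i 1, Algebra.subset_adjoin
    (Or.inr ((Set.countable_singleton i).mono Pi.support_single_subset))⟩

theorem single_apply_self (i : ℝ) : (single i : ℝ → ZMod 2) i = 1 := Pi.single_eq_same i 1

theorem single_mem_supportedIn (i : ℝ) :
    single i ∈ countableSupportSubalgebra.supportedIn {i} :=
  Pi.support_single_subset

variable {S : Set ℝ} {D : Submodule countableSupportSubalgebraᵐᵒᵖ countableSupportSubalgebra}
  {e : countableSupportSubalgebra}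

theorem not_supportedIn_le_of_eventuallyEq_zero (hS : ¬S.Countable) (he : ∀ d ∈ D, e * d = d)
    (h0 : (e : ℝ → ZMod 2) =ᶠ[cocountable] 0) : ¬countableSupportSubalgebra.supportedIn S ≤ D := by
  intro hle
  obtain ⟨i, hiS, hei⟩ := h0.exists_mem_of_not_countable hS
  have hδ : single i ∈ countableSupportSubalgebra.supportedIn S :=
    (single_mem_supportedIn i).trans (Set.singleton_subset_iff.2 hiS)
  have := congrArg (fun x : countableSupportSubalgebra => (x : ℝ → ZMod 2) i) (he _ (hle hδ))
  simp [single_apply_self, hei] at this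

theorem not_essentialIn_of_eventuallyEq_one (hS : ¬Sᶜ.Countable) (heD : e ∈ D)
    (h1 : (e : ℝ → ZMod 2) =ᶠ[cocountable] 1) :
    ¬(countableSupportSubalgebra.supportedIn S).EssentialIn D := by
  rintro ⟨-, hess⟩
  obtain ⟨i, hiS, hei⟩ := h1.exists_mem_of_not_countable hS
  have hδD : single i ∈ D := by
    have : e * single i = single i := Subtype.ext <| by
      show (e : ℝ → ZMod 2) * Pi.single i 1 = Pi.single i 1
      rw [← Pi.single_mul_right, hei, Pi.one_apply, one_mul]
    exact this ▸ D.smul_mem (MulOpposite.op (single i)) heD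
  have hδ : single i ≠ 0 := fun h => by
    simpa [single_apply_self] using
      congrArg (fun x : countableSupportSubalgebra => (x : ℝ → ZMod 2) i) h
  refine hess _ (Submodule.span_le.2 (Set.singleton_subset_iff.2 hδD))
    (Submodule.span_singleton_eq_bot.not.2 hδ) (eq_bot_iff.2 ?_)
  calc Submodule.span _ {single i} ⊓ countableSupportSubalgebra.supportedIn S
      ≤ countableSupportSubalgebra.supportedIn {i} ⊓ countableSupportSubalgebra.supportedIn S :=
        inf_le_inf_right _
          (Submodule.span_le.2 (Set.singleton_subset_iff.2 (single_mem_supportedIn i)))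
    _ = ⊥ := by
        rw [Subalgebra.supportedIn_inf, Set.singleton_inter_eq_empty.2 hiS,
          Subalgebra.supportedIn_empty]

end CountableSupportSubalgebra

open CountableSupportSubalgebra in
set_option synthInstance.maxHeartbeats 1000000 in
/-- Goodearl's example: with `Q = ∏_{i ∈ ℝ} 𝔽₂` and `R` the `𝔽₂`-subalgebra of `Q`
generated by `1` and `J = {x ∈ Q | xᵢ = 0 for all but countably many i}`, the ring `R`
is Boolean (every element is idempotent), and `R` is not CS: there is a right ideal of
`R` (a `(↥R)ᵐᵒᵖ`-submodule of `R`) that is not essential in any direct summand of `R`. -/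
theorem countableSupportSubalgebra_boolean_not_CS :
    (∀ x : countableSupportSubalgebra, x * x = x) ∧
    ∃ I : Submodule (↥countableSupportSubalgebra)ᵐᵒᵖ ↥countableSupportSubalgebra,
      ∀ D : Submodule (↥countableSupportSubalgebra)ᵐᵒᵖ ↥countableSupportSubalgebra,
        (∃ D', IsCompl D D') → ¬I.EssentialIn D := by
  refine ⟨fun x => Subtype.ext <| funext fun i => (sq _).symm.trans (ZMod.pow_card _),
    countableSupportSubalgebra.supportedIn (Set.Iio 0), ?_⟩
  rintro D ⟨D', hDD'⟩ hID
  have hneg : ¬(Set.Iio (0 : ℝ)).Countable :=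
    Real.not_countable_of_Ioo_subset neg_one_lt_zero Set.Ioo_subset_Iio_self
  have hnonneg : ¬(Set.Iio (0 : ℝ))ᶜ.Countable := by
    rw [Set.compl_Iio]
    exact Real.not_countable_of_Ioo_subset one_pos
      (Set.Ioo_subset_Icc_self.trans Set.Icc_subset_Ici_self)
  obtain ⟨e, heD, he⟩ := Submodule.exists_mul_eq_self_of_isCompl hDD'
  rcases eventuallyEq_zero_or_one e with h0 | h1
  · exact not_supportedIn_le_of_eventuallyEq_zero hneg he h0 hID.1
  · exact not_essentialIn_of_eventuallyEq_one hnonneg heD h1 hID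
end

section
/- Let M be a right pseudo injective nonsingular module over a ring R, let E be an injective right R-module containing M with M essential in E (an injective hull of M). If N is a closed submodule of E and σ is an injective R-module homomorphism from N into E, then σ(N ∩ M) = σ(N) ∩ M. -/
/-- A submodule is closed if it has no proper essential extension inside the ambient
module. -/
def Submodule.IsClosedSub {R M : Type*} [Ring R] [AddCommGroup M] [Module R M]
    (N : Submodule R M) : Prop :=
  ∀ P : Submodule R M, N.EssentialIn P → P = N

/-- The right annihilator of an element `m` of a right `R`-module `M`
(an `Rᵐᵒᵖ`-module), as a right ideal of `R`. -/
def rightAnnihilator (R : Type*) {M : Type*} [Ring R] [AddCommGroup M] [Module Rᵐᵒᵖ M]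
    (m : M) : Submodule Rᵐᵒᵖ R where
  carrier := {r : R | MulOpposite.op r • m = 0}
  zero_mem' := by simp
  add_mem' := by
    intro a b ha hb
    simp only [Set.mem_setOf_eq, MulOpposite.op_add, add_smul] at *
    rw [ha, hb, add_zero]
  smul_mem' := by
    intro c x hx
    have h : MulOpposite.op (c • x) = c * MulOpposite.op x := rfl
    simp only [Set.mem_setOf_eq] at *
    rw [h, mul_smul, hx, smul_zero]

/-- A right `R`-module `M` is *nonsingular* if no nonzero element of `M` is annihilated
by an essential right ideal of `R`. -/
def IsNonsingularModule (R M : Type*) [Ring R] [AddCommGroup M] [Module Rᵐᵒᵖ M] : Prop :=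
  ∀ m : M, (rightAnnihilator R m).EssentialIn ⊤ → m = 0


/-!
Every injective map `τ : P → E` from a submodule of `E` sends `P ∩ M` into `M`. On
`K = {p ∈ P ∩ M | τ p ∈ M}`, which is essential in `P`, `τ` is an injective map from a
submodule of `M` into `M`, so pseudo injectivity extends it to an endomorphism of `M`, and
injectivity of `E` to an endomorphism `h` of `E` preserving `M`. As `E` is nonsingular together
with its essential submodule `M`, the maps `τ` and `h` agree on all of `P`, so
`τ (P ∩ M) = h (P ∩ M) ⊆ M`.
The equality `σ(N ∩ M) = σ(N) ∩ M` follows by applying this to `σ` and to `σ⁻¹ : σ(N) → E`.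
-/

namespace Submodule

variable {S X Y : Type*} [Ring S] [AddCommGroup X] [AddCommGroup Y] [Module S X] [Module S Y]

theorem essentialIn_top_comap {Q : Submodule S Y} (hQ : Q.EssentialIn ⊤) (f : X →ₗ[S] Y) :
    (Q.comap f).EssentialIn ⊤ := by
  refine ⟨le_top, fun J _ hJ => ?_⟩
  by_cases hmap : J.map f = ⊥
  · have hJQ : J ≤ Q.comap f := fun j hj => by
      rw [mem_comap, (Submodule.eq_bot_iff _).mp hmap _ (mem_map_of_mem hj)]
      exact Q.zero_mem
    rwa [inf_eq_left.mpr hJQ]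
  · obtain ⟨_, ⟨⟨j, hjJ, rfl⟩, hjQ⟩, hj0⟩ := Submodule.ne_bot_iff _ |>.mp (hQ.2 _ le_top hmap)
    exact Submodule.ne_bot_iff _ |>.mpr ⟨j, ⟨hjJ, hjQ⟩, fun h => hj0 (by rw [h, map_zero])⟩

theorem essentialIn_top_inf {I J : Submodule S X} (hI : I.EssentialIn ⊤)
    (hJ : J.EssentialIn ⊤) : (I ⊓ J).EssentialIn ⊤ :=
  ⟨le_top, fun K _ hK => by rw [← inf_assoc]; exact hJ.2 _ le_top (hI.2 K le_top hK)⟩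

theorem essentialIn_top_mono {I J : Submodule S X} (hI : I.EssentialIn ⊤) (hIJ : I ≤ J) :
    J.EssentialIn ⊤ :=
  ⟨le_top, fun K hK hK0 h => hI.2 K hK hK0 (eq_bot_iff.mpr (h ▸ inf_le_inf_left K hIJ))⟩

end Submodule

open Submodule MulOpposite

theorem IsPseudoInjective.exists_comp_eq {S M X : Type*} [Ring S] [AddCommGroup M] [Module S M]
    [AddCommGroup X] [Module S X] (hM : IsPseudoInjective S M) {i f : X →ₗ[S] M}
    (hi : Function.Injective i) (hf : Function.Injective f) : ∃ g : M →ₗ[S] M, g ∘ₗ i = f := by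
  let e := LinearEquiv.ofInjective i hi
  obtain ⟨g, hg⟩ := hM (LinearMap.range i) (f ∘ₗ e.symm.toLinearMap) (hf.comp e.symm.injective)
  exact ⟨g, LinearMap.ext fun x => by simpa [e] using hg (e x)⟩

theorem IsPseudoInjective.exists_extend_of_injective {S E X : Type*} [Ring S] [AddCommGroup E]
    [Module S E] [AddCommGroup X] [Module S X] (hE : Module.Injective S E) {M : Submodule S E}
    (hM : IsPseudoInjective S M) {i f : X →ₗ[S] M} (hi : Function.Injective i)
    (hf : Function.Injective f) :
    ∃ h : E →ₗ[S] E, (∀ m ∈ M, h m ∈ M) ∧ ∀ x, h (i x) = f x := by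
  obtain ⟨g, hg⟩ := hM.exists_comp_eq hi hf
  obtain ⟨h, hh⟩ := hE.out M.subtype M.injective_subtype (M.subtype ∘ₗ g)
  refine ⟨h, fun m hm => ?_, fun x => ?_⟩
  · rw [show m = M.subtype ⟨m, hm⟩ from rfl, hh]
    exact (g _).2
  · exact (hh (i x)).trans (congrArg Subtype.val (LinearMap.congr_fun hg x))

section Nonsingular

variable {R E X : Type*} [Ring R] [AddCommGroup E] [Module Rᵐᵒᵖ E] [AddCommGroup X]
  [Module Rᵐᵒᵖ X]

def opSmulRight (e : E) : R →ₗ[Rᵐᵒᵖ] E where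
  toFun r := op r • e
  map_add' a b := by simp [add_smul]
  map_smul' c r := by
    rw [smul_eq_mul_unop, RingHom.id_apply, op_mul, op_unop, mul_smul]

@[simp]
theorem opSmulRight_apply (e : E) (r : R) : opSmulRight e r = op r • e := rfl

theorem rightAnnihilator_smul (c : Rᵐᵒᵖ) (e : E) :
    rightAnnihilator R (c • e) = (rightAnnihilator R e).comap (opSmulRight c.unop) := by
  ext r
  change op r • c • e = 0 ↔ op (op r • c.unop) • e = 0
  rw [smul_eq_mul_unop, op_mul, op_unop, op_unop, mul_smul]

theorem rightAnnihilator_coe {M : Submodule Rᵐᵒᵖ E} (m : M) :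
    rightAnnihilator R m = rightAnnihilator R (m : E) := by
  ext r
  change op r • m = 0 ↔ op r • (m : E) = 0
  rw [← Submodule.coe_smul, Submodule.coe_eq_zero]

theorem IsNonsingularModule.of_essentialIn {M : Submodule Rᵐᵒᵖ E} (hMess : M.EssentialIn ⊤)
    (hMns : IsNonsingularModule R M) : IsNonsingularModule R E := by
  intro e he
  by_contra hne
  have hspan : span Rᵐᵒᵖ {e} ≠ ⊥ := by simpa using hne
  obtain ⟨_, ⟨hm, hmM⟩, hm0⟩ := Submodule.ne_bot_iff _ |>.mp (hMess.2 _ le_top hspan)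
  obtain ⟨c, rfl⟩ := mem_span_singleton.mp hm
  refine hm0 (congrArg Subtype.val (hMns ⟨c • e, hmM⟩ ?_))
  rw [rightAnnihilator_coe, rightAnnihilator_smul]
  exact essentialIn_top_comap he _

theorem LinearMap.eq_of_eqOn_essentialIn (hE : IsNonsingularModule R E)
    {K : Submodule Rᵐᵒᵖ X} (hK : K.EssentialIn ⊤) {φ ψ : X →ₗ[Rᵐᵒᵖ] E}
    (h : ∀ x ∈ K, φ x = ψ x) : φ = ψ := by
  ext x
  rw [← sub_eq_zero]
  refine hE _ (essentialIn_top_mono (essentialIn_top_comap hK (opSmulRight x)) fun r hr => ?_)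
  change op r • (φ x - ψ x) = 0
  rw [smul_sub, ← map_smul, ← map_smul, h (op r • x) hr, sub_self]

end Nonsingular

theorem IsPseudoInjective.apply_mem_of_injective {R E : Type*} [Ring R] [AddCommGroup E]
    [Module Rᵐᵒᵖ E] (hE : Module.Injective Rᵐᵒᵖ E) {M : Submodule Rᵐᵒᵖ E}
    (hMess : M.EssentialIn ⊤) (hMpi : IsPseudoInjective Rᵐᵒᵖ M)
    (hMns : IsNonsingularModule R M) {P : Submodule Rᵐᵒᵖ E} {τ : P →ₗ[Rᵐᵒᵖ] E}
    (hτ : Function.Injective τ) {p : P} (hp : (p : E) ∈ M) : τ p ∈ M := by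
  let K : Submodule Rᵐᵒᵖ P := M.comap P.subtype ⊓ M.comap τ
  have hK : K.EssentialIn ⊤ :=
    essentialIn_top_inf (essentialIn_top_comap hMess _) (essentialIn_top_comap hMess _)
  let i : K →ₗ[Rᵐᵒᵖ] M := (P.subtype ∘ₗ K.subtype).codRestrict M fun x => x.2.1
  let f : K →ₗ[Rᵐᵒᵖ] M := (τ ∘ₗ K.subtype).codRestrict M fun x => x.2.2
  have hi : Function.Injective i := fun x y hxy => by
    have hxy' := congrArg Subtype.val hxy
    exact Subtype.ext (Subtype.ext hxy')
  have hf : Function.Injective f := fun x y hxy => by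
    have hxy' := congrArg Subtype.val hxy
    exact Subtype.ext (hτ hxy')
  obtain ⟨h, hhM, hhK⟩ := hMpi.exists_extend_of_injective hE (X := K) hi hf
  have hτh : τ = h ∘ₗ P.subtype :=
    LinearMap.eq_of_eqOn_essentialIn (.of_essentialIn hMess hMns) hK
      fun x hx => (hhK ⟨x, hx⟩).symm
  rw [hτh]
  exact hhM _ hp

theorem pseudoInjective_image_of_intersection_general
    (R E : Type*) [Ring R] [AddCommGroup E] [Module Rᵐᵒᵖ E]
    (hE : Module.Injective Rᵐᵒᵖ E) (M : Submodule Rᵐᵒᵖ E)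
    (hMess : M.EssentialIn ⊤)
    (hMpi : IsPseudoInjective Rᵐᵒᵖ ↥M)
    (hMns : IsNonsingularModule R ↥M)
    (N : Submodule Rᵐᵒᵖ E)
    (σ : N →ₗ[Rᵐᵒᵖ] E) (hσ : Function.Injective σ) :
    ∀ y : E, (∃ x : N, (x : E) ∈ M ∧ σ x = y) ↔ ((∃ x : N, σ x = y) ∧ y ∈ M) := by
  intro y
  constructor
  · rintro ⟨x, hxM, rfl⟩
    exact ⟨⟨x, rfl⟩, hMpi.apply_mem_of_injective hE hMess hMns hσ hxM⟩
  · rintro ⟨⟨x, rfl⟩, hyM⟩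
    let e := LinearEquiv.ofInjective σ hσ
    have hσinv : Function.Injective (N.subtype ∘ₗ e.symm.toLinearMap) :=
      N.injective_subtype.comp e.symm.injective
    refine ⟨x, ?_, rfl⟩
    simpa [e] using hMpi.apply_mem_of_injective hE hMess hMns hσinv
      (p := e x) hyM

/-- Let `M` be a pseudo injective nonsingular right `R`-module (an `Rᵐᵒᵖ`-module),
`E ⊇ M` an injective hull of `M` (`E` injective with `M` essential in `E`).  If `N` is a
closed submodule of `E` and `σ : N → E` is an injective `R`-module homomorphism, then
`σ(N ∩ M) = σ(N) ∩ M`. -/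
theorem pseudoInjective_image_of_intersection
    (R E : Type*) [Ring R] [AddCommGroup E] [Module Rᵐᵒᵖ E]
    (hE : Module.Injective Rᵐᵒᵖ E) (M : Submodule Rᵐᵒᵖ E)
    (hMess : M.EssentialIn ⊤)
    (hMpi : IsPseudoInjective Rᵐᵒᵖ ↥M)
    (hMns : IsNonsingularModule R ↥M)
    (N : Submodule Rᵐᵒᵖ E) (hN : N.IsClosedSub)
    (σ : N →ₗ[Rᵐᵒᵖ] E) (hσ : Function.Injective σ) :
    ∀ y : E, (∃ x : N, (x : E) ∈ M ∧ σ x = y) ↔ ((∃ x : N, σ x = y) ∧ y ∈ M) :=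
  pseudoInjective_image_of_intersection_general R E hE M hMess hMpi hMns N σ hσ
end

section
/- Let R be a von Neumann regular ring and Q a von Neumann regular, right self-injective ring containing R as a subring with R essential in Q as a right R-module (Q the maximal right quotient ring of R). Let e, f be idempotents of R with eR ≅ fR as right R-modules, and let g be an idempotent of Q such that eQ ⊕ gQ = Q = fQ ⊕ gQ. Then (1−e)gQ = (1−e)Q and ((1−e)gQ) ∩ R = (1−e)R. -/
/-- A subset `A` of `Q` is a right `R`-submodule set for a subring `R ≤ Q`:
it is an additive subgroup closed under right multiplication by elements of `R`. -/
def IsRightSubmodSet {Q : Type*} [Ring Q] (R : Subring Q) (A : Set Q) : Prop :=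
  0 ∈ A ∧ (∀ a ∈ A, ∀ b ∈ A, a + b ∈ A) ∧ (∀ a ∈ A, -a ∈ A) ∧
    ∀ a ∈ A, ∀ r ∈ R, a * r ∈ A

/-- `A` is essential in `B` as right `R`-modules (`A ⊆ B ⊆ Q`, `R` a subring of `Q`):
every nonzero right `R`-submodule of `B` has nonzero intersection with `A`. -/
def EssentialInSet {Q : Type*} [Ring Q] (R : Subring Q) (A B : Set Q) : Prop :=
  A ⊆ B ∧ ∀ X : Set Q, IsRightSubmodSet R X → X ⊆ B → (∃ x ∈ X, x ≠ 0) →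
    ∃ x ∈ X, x ∈ A ∧ x ≠ 0

section RightIdeals

variable {Q : Type*} [Ring Q]

theorem exists_mul_add_mul_eq_one_of_span_sup_eq_top {a b : Q}
    (h : Submodule.span Qᵐᵒᵖ {a} ⊔ Submodule.span Qᵐᵒᵖ {b} = ⊤) :
    ∃ x y : Q, a * x + b * y = 1 := by
  obtain ⟨_, ha, _, hb, hab⟩ := Submodule.mem_sup.mp (h ▸ Submodule.mem_top (x := (1 : Q)))
  obtain ⟨x, rfl⟩ := Submodule.mem_span_singleton.mp ha
  obtain ⟨y, rfl⟩ := Submodule.mem_span_singleton.mp hb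
  exact ⟨x.unop, y.unop, hab⟩

theorem IsIdempotentElem.one_sub_mul_mul_eq_one_sub {e g x y : Q} (he : IsIdempotentElem e)
    (h : e * x + g * y = 1) : (1 - e) * g * y = 1 - e := by
  calc (1 - e) * g * y = (1 - e) * (e * x + g * y) := by
        rw [mul_add, ← mul_assoc, he.one_sub_mul_self, zero_mul, zero_add, mul_assoc]
    _ = 1 - e := by rw [h, mul_one]

theorem setOf_eq_mul_mul_eq_setOf_eq_mul {c g y : Q} (h : c * g * y = c) :
    {z : Q | ∃ x : Q, z = c * g * x} = {z : Q | ∃ x : Q, z = c * x} := by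
  ext z
  constructor
  · rintro ⟨x, rfl⟩
    exact ⟨g * x, mul_assoc c g x⟩
  · rintro ⟨x, rfl⟩
    exact ⟨y * x, by rw [← mul_assoc, h]⟩

theorem IsIdempotentElem.setOf_eq_mul_inter_subring {c : Q} (hc : IsIdempotentElem c)
    (R : Subring Q) (hcR : c ∈ R) :
    {z : Q | ∃ x : Q, z = c * x} ∩ (R : Set Q) = {z : Q | ∃ r ∈ R, z = c * r} := by
  ext z
  constructor
  · rintro ⟨⟨x, rfl⟩, hxR⟩
    exact ⟨c * x, hxR, by rw [← mul_assoc, hc.eq]⟩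
  · rintro ⟨r, hr, rfl⟩
    exact ⟨⟨r, rfl⟩, R.mul_mem hcR hr⟩

end RightIdeals

theorem one_sub_e_g_Q_general
    (Q : Type*) [Ring Q]
    (R : Subring Q)
    (e : ↥R) (he : IsIdempotentElem e)
    (g : Q)
    (hse : Submodule.span Qᵐᵒᵖ {(e : Q)} ⊔ Submodule.span Qᵐᵒᵖ {g} = ⊤) :
    {y : Q | ∃ x : Q, y = (1 - (e : Q)) * g * x} = {y : Q | ∃ x : Q, y = (1 - (e : Q)) * x} ∧
    {y : Q | ∃ x : Q, y = (1 - (e : Q)) * g * x} ∩ (R : Set Q) =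
      {y : Q | ∃ r ∈ R, y = (1 - (e : Q)) * r} := by
  have he' : IsIdempotentElem (e : Q) := he.map R.subtype
  obtain ⟨a, b, hab⟩ := exists_mul_add_mul_eq_one_of_span_sup_eq_top hse
  have hrange := setOf_eq_mul_mul_eq_setOf_eq_mul (he'.one_sub_mul_mul_eq_one_sub hab)
  refine ⟨hrange, ?_⟩
  rw [hrange]
  exact he'.one_sub.setOf_eq_mul_inter_subring R (R.sub_mem R.one_mem e.2)

/-- Setup: `R` is a von Neumann regular subring of its maximal right quotient ring `Q`
(a von Neumann regular right self-injective ring in which `R` is essential as a right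
`R`-module); `e, f` are idempotents of `R` with `eR ≅ fR` as right `R`-modules, and `g`
is an idempotent of `Q` with `eQ ⊕ gQ = Q = fQ ⊕ gQ` (internal direct sums of right
ideals of `Q`, i.e. `Qᵐᵒᵖ`-submodules).
Conclusion: `(1-e)gQ = (1-e)Q` and `((1-e)gQ) ∩ R = (1-e)R` (as subsets of `Q`). -/
theorem one_sub_e_g_Q
    (Q : Type*) [Ring Q] (hQreg : IsVonNeumannRegularRing Q)
    (hQinj : Module.Injective Qᵐᵒᵖ Q)
    (R : Subring Q) (hRreg : IsVonNeumannRegularRing ↥R)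
    (hRess : EssentialInSet R (R : Set Q) Set.univ)
    (e f : ↥R) (he : IsIdempotentElem e) (hf : IsIdempotentElem f)
    (hef : Nonempty ((Submodule.span (↥R)ᵐᵒᵖ {e} : Submodule (↥R)ᵐᵒᵖ ↥R) ≃ₗ[(↥R)ᵐᵒᵖ]
      (Submodule.span (↥R)ᵐᵒᵖ {f} : Submodule (↥R)ᵐᵒᵖ ↥R)))
    (g : Q) (hg : IsIdempotentElem g)
    (hde : Submodule.span Qᵐᵒᵖ {(e : Q)} ⊓ Submodule.span Qᵐᵒᵖ {g} = ⊥)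
    (hse : Submodule.span Qᵐᵒᵖ {(e : Q)} ⊔ Submodule.span Qᵐᵒᵖ {g} = ⊤)
    (hdf : Submodule.span Qᵐᵒᵖ {(f : Q)} ⊓ Submodule.span Qᵐᵒᵖ {g} = ⊥)
    (hsf : Submodule.span Qᵐᵒᵖ {(f : Q)} ⊔ Submodule.span Qᵐᵒᵖ {g} = ⊤) :
    {y : Q | ∃ x : Q, y = (1 - (e : Q)) * g * x} = {y : Q | ∃ x : Q, y = (1 - (e : Q)) * x} ∧
    {y : Q | ∃ x : Q, y = (1 - (e : Q)) * g * x} ∩ (R : Set Q) =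
      {y : Q | ∃ r ∈ R, y = (1 - (e : Q)) * r} :=
  one_sub_e_g_Q_general Q R e he g hse
end

section
/- Let R be a von Neumann regular ring and Q a von Neumann regular, right self-injective ring containing R as a subring with R essential in Q as a right R-module (Q the maximal right quotient ring of R). Let e, f be idempotents of R with eR ≅ fR as right R-modules, and let g be an idempotent of Q such that eQ ⊕ gQ = Q = fQ ⊕ gQ. Then (1−e)(gQ ∩ R) is essential in (1−e)R and in (1−e)Q as right R-modules, and (1−f)(gQ ∩ R) is essential in (1−f)R and in (1−f)Q as right R-modules. -/
/-!
Since `eQ ∩ gQ = 0`, left multiplication by `1 - e` is injective on `gQ`, and since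
`eQ + gQ = Q` it maps `gQ` onto `(1 - e)Q`. A nonzero right `R`-submodule `X` of `(1 - e)Q`
therefore pulls back to a nonzero submodule of `gQ`, which meets `R` nontrivially because `R`
is essential in `Q`; the image of a nonzero element of that intersection is a nonzero element
of `X ∩ (1 - e)(gQ ∩ R)`. Essentiality in the smaller module `(1 - e)R` follows.
-/

section

variable {Q : Type*} [Ring Q] {R : Subring Q}

lemma mem_span_op_singleton {a x : Q} :
    x ∈ Submodule.span Qᵐᵒᵖ {a} ↔ ∃ q : Q, x = a * q := by
  rw [Submodule.mem_span_singleton]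
  constructor
  · rintro ⟨⟨q⟩, rfl⟩
    exact ⟨q, rfl⟩
  · rintro ⟨q, rfl⟩
    exact ⟨MulOpposite.op q, rfl⟩

namespace IsRightSubmodSet

lemma inter {A B : Set Q} (hA : IsRightSubmodSet R A) (hB : IsRightSubmodSet R B) :
    IsRightSubmodSet R (A ∩ B) :=
  ⟨⟨hA.1, hB.1⟩, fun a ha b hb => ⟨hA.2.1 a ha.1 b hb.1, hB.2.1 a ha.2 b hb.2⟩,
    fun a ha => ⟨hA.2.2.1 a ha.1, hB.2.2.1 a ha.2⟩,
    fun a ha r hr => ⟨hA.2.2.2 a ha.1 r hr, hB.2.2.2 a ha.2 r hr⟩⟩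

lemma preimage_mul_left {X : Set Q} (hX : IsRightSubmodSet R X) (c : Q) :
    IsRightSubmodSet R {y | c * y ∈ X} := by
  refine ⟨?_, fun a ha b hb => ?_, fun a ha => ?_, fun a ha r hr => ?_⟩
  · show c * 0 ∈ X
    exact (mul_zero c).symm ▸ hX.1
  · show c * (a + b) ∈ X
    exact (mul_add c a b).symm ▸ hX.2.1 _ ha _ hb
  · show c * -a ∈ X
    exact (mul_neg c a).symm ▸ hX.2.2.1 _ ha
  · show c * (a * r) ∈ X
    exact mul_assoc c a r ▸ hX.2.2.2 _ ha r hr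

lemma range_mul_left (g : Q) : IsRightSubmodSet R {z | ∃ q, z = g * q} := by
  refine ⟨⟨0, (mul_zero g).symm⟩, ?_, ?_, ?_⟩
  · rintro _ ⟨a, rfl⟩ _ ⟨b, rfl⟩
    exact ⟨a + b, (mul_add g a b).symm⟩
  · rintro _ ⟨a, rfl⟩
    exact ⟨-a, (mul_neg g a).symm⟩
  · rintro _ ⟨a, rfl⟩ r _
    exact ⟨a * r, mul_assoc g a r⟩

end IsRightSubmodSet

lemma EssentialInSet.mono_right {A B B' : Set Q} (h : EssentialInSet R A B)
    (hAB' : A ⊆ B') (hB'B : B' ⊆ B) : EssentialInSet R A B' :=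
  ⟨hAB', fun X hX hXB' hne => h.2 X hX (hXB'.trans hB'B) hne⟩

lemma essentialInSet_mul_left_inter
    (hRess : EssentialInSet R (R : Set Q) Set.univ) {S : Set Q} (hS : IsRightSubmodSet R S)
    {c : Q} (hinj : ∀ s ∈ S, c * s = 0 → s = 0) (hsurj : ∀ x, ∃ s ∈ S, c * x = c * s) :
    EssentialInSet R {y | ∃ x ∈ S ∩ (R : Set Q), y = c * x} {y | ∃ x, y = c * x} := by
  refine ⟨fun _ ⟨x, _, hy⟩ => ⟨x, hy⟩, fun X hX hXc ⟨x₀, hx₀X, hx₀⟩ => ?_⟩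
  obtain ⟨x, rfl⟩ := hXc hx₀X
  obtain ⟨s, hsS, hxs⟩ := hsurj x
  have hY : IsRightSubmodSet R (S ∩ {y | c * y ∈ X}) := hS.inter (hX.preimage_mul_left c)
  have hs : s ≠ 0 := by
    rintro rfl
    exact hx₀ (by rw [hxs, mul_zero])
  obtain ⟨y, ⟨hyS, hyX⟩, hyR, hy⟩ :=
    hRess.2 _ hY (Set.subset_univ _) ⟨s, ⟨hsS, (hxs ▸ hx₀X : c * s ∈ X)⟩, hs⟩
  exact ⟨c * y, hyX, ⟨y, ⟨hyS, hyR⟩, rfl⟩, fun h => hy (hinj y hyS h)⟩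

lemma one_sub_mul_eq_zero_of_inf_eq_bot {e g : Q}
    (hde : Submodule.span Qᵐᵒᵖ {e} ⊓ Submodule.span Qᵐᵒᵖ {g} = ⊥) (q : Q)
    (h : (1 - e) * (g * q) = 0) : g * q = 0 := by
  have hmem : g * q ∈ Submodule.span Qᵐᵒᵖ {e} ⊓ Submodule.span Qᵐᵒᵖ {g} :=
    ⟨mem_span_op_singleton.2 ⟨g * q, (sub_eq_zero.1 (by rwa [sub_mul, one_mul] at h))⟩,
      mem_span_op_singleton.2 ⟨q, rfl⟩⟩
  rwa [hde] at hmem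

lemma exists_one_sub_mul_eq_of_sup_eq_top {e g : Q} (he : IsIdempotentElem e)
    (hse : Submodule.span Qᵐᵒᵖ {e} ⊔ Submodule.span Qᵐᵒᵖ {g} = ⊤) (x : Q) :
    ∃ q, (1 - e) * x = (1 - e) * (g * q) := by
  obtain ⟨_, ha, _, hb, hab⟩ := Submodule.mem_sup.1 (hse ▸ Submodule.mem_top : x ∈ _)
  obtain ⟨a, rfl⟩ := mem_span_op_singleton.1 ha
  obtain ⟨b, rfl⟩ := mem_span_op_singleton.1 hb
  refine ⟨b, ?_⟩
  rw [← hab, mul_add, ← mul_assoc, sub_mul, one_mul, he.eq, sub_self, zero_mul, zero_add]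

lemma essentialInSet_one_sub_mul_inter
    (hRess : EssentialInSet R (R : Set Q) Set.univ) {e g : Q} (he : IsIdempotentElem e)
    (hde : Submodule.span Qᵐᵒᵖ {e} ⊓ Submodule.span Qᵐᵒᵖ {g} = ⊥)
    (hse : Submodule.span Qᵐᵒᵖ {e} ⊔ Submodule.span Qᵐᵒᵖ {g} = ⊤) :
    EssentialInSet R {y | ∃ x ∈ {z | ∃ q, z = g * q} ∩ (R : Set Q), y = (1 - e) * x}
      {y | ∃ x, y = (1 - e) * x} := by
  refine essentialInSet_mul_left_inter hRess (.range_mul_left g) ?_ fun x => ?_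
  · rintro _ ⟨q, rfl⟩
    exact one_sub_mul_eq_zero_of_inf_eq_bot hde q
  · obtain ⟨q, hq⟩ := exists_one_sub_mul_eq_of_sup_eq_top he hse x
    exact ⟨g * q, ⟨q, rfl⟩, hq⟩

lemma EssentialInSet.restrict_mul_left_subring {S : Set Q} {c : Q}
    (h : EssentialInSet R {y | ∃ x ∈ S ∩ (R : Set Q), y = c * x} {y | ∃ x, y = c * x}) :
    EssentialInSet R {y | ∃ x ∈ S ∩ (R : Set Q), y = c * x} {y | ∃ r ∈ R, y = c * r} :=
  h.mono_right (fun _ ⟨x, ⟨_, hx⟩, hy⟩ => ⟨x, hx, hy⟩) fun _ ⟨r, _, hy⟩ => ⟨r, hy⟩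

end

theorem one_sub_e_gQ_cap_R_essential_general
    (Q : Type*) [Ring Q]
    (R : Subring Q)
    (hRess : EssentialInSet R (R : Set Q) Set.univ)
    (e f : ↥R) (he : IsIdempotentElem e) (hf : IsIdempotentElem f)
    (g : Q)
    (hde : Submodule.span Qᵐᵒᵖ {(e : Q)} ⊓ Submodule.span Qᵐᵒᵖ {g} = ⊥)
    (hse : Submodule.span Qᵐᵒᵖ {(e : Q)} ⊔ Submodule.span Qᵐᵒᵖ {g} = ⊤)
    (hdf : Submodule.span Qᵐᵒᵖ {(f : Q)} ⊓ Submodule.span Qᵐᵒᵖ {g} = ⊥)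
    (hsf : Submodule.span Qᵐᵒᵖ {(f : Q)} ⊔ Submodule.span Qᵐᵒᵖ {g} = ⊤) :
    EssentialInSet R
      {y : Q | ∃ x ∈ {z : Q | ∃ q : Q, z = g * q} ∩ (R : Set Q), y = (1 - (e : Q)) * x}
      {y : Q | ∃ r ∈ R, y = (1 - (e : Q)) * r} ∧
    EssentialInSet R
      {y : Q | ∃ x ∈ {z : Q | ∃ q : Q, z = g * q} ∩ (R : Set Q), y = (1 - (e : Q)) * x}
      {y : Q | ∃ x : Q, y = (1 - (e : Q)) * x} ∧
    EssentialInSet R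
      {y : Q | ∃ x ∈ {z : Q | ∃ q : Q, z = g * q} ∩ (R : Set Q), y = (1 - (f : Q)) * x}
      {y : Q | ∃ r ∈ R, y = (1 - (f : Q)) * r} ∧
    EssentialInSet R
      {y : Q | ∃ x ∈ {z : Q | ∃ q : Q, z = g * q} ∩ (R : Set Q), y = (1 - (f : Q)) * x}
      {y : Q | ∃ x : Q, y = (1 - (f : Q)) * x} := by
  have hE := essentialInSet_one_sub_mul_inter hRess (he.map R.subtype) hde hse
  have hF := essentialInSet_one_sub_mul_inter hRess (hf.map R.subtype) hdf hsf
  exact ⟨hE.restrict_mul_left_subring, hE, hF.restrict_mul_left_subring, hF⟩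

/-- Setup: `R` is a von Neumann regular subring of its maximal right quotient ring `Q`
(a von Neumann regular right self-injective ring in which `R` is essential as a right
`R`-module); `e, f` are idempotents of `R` with `eR ≅ fR` as right `R`-modules, and `g`
is an idempotent of `Q` with `eQ ⊕ gQ = Q = fQ ⊕ gQ` (internal direct sums of right
ideals of `Q`, i.e. `Qᵐᵒᵖ`-submodules).
Conclusion: `(1-e)(gQ ∩ R)` is essential in `(1-e)R` and in `(1-e)Q` as right
`R`-modules, and likewise for `f`. -/
theorem one_sub_e_gQ_cap_R_essential
    (Q : Type*) [Ring Q] (hQreg : IsVonNeumannRegularRing Q)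
    (hQinj : Module.Injective Qᵐᵒᵖ Q)
    (R : Subring Q) (hRreg : IsVonNeumannRegularRing ↥R)
    (hRess : EssentialInSet R (R : Set Q) Set.univ)
    (e f : ↥R) (he : IsIdempotentElem e) (hf : IsIdempotentElem f)
    (hef : Nonempty ((Submodule.span (↥R)ᵐᵒᵖ {e} : Submodule (↥R)ᵐᵒᵖ ↥R) ≃ₗ[(↥R)ᵐᵒᵖ]
      (Submodule.span (↥R)ᵐᵒᵖ {f} : Submodule (↥R)ᵐᵒᵖ ↥R)))
    (g : Q) (hg : IsIdempotentElem g)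
    (hde : Submodule.span Qᵐᵒᵖ {(e : Q)} ⊓ Submodule.span Qᵐᵒᵖ {g} = ⊥)
    (hse : Submodule.span Qᵐᵒᵖ {(e : Q)} ⊔ Submodule.span Qᵐᵒᵖ {g} = ⊤)
    (hdf : Submodule.span Qᵐᵒᵖ {(f : Q)} ⊓ Submodule.span Qᵐᵒᵖ {g} = ⊥)
    (hsf : Submodule.span Qᵐᵒᵖ {(f : Q)} ⊔ Submodule.span Qᵐᵒᵖ {g} = ⊤) :
    EssentialInSet R
      {y : Q | ∃ x ∈ {z : Q | ∃ q : Q, z = g * q} ∩ (R : Set Q), y = (1 - (e : Q)) * x}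
      {y : Q | ∃ r ∈ R, y = (1 - (e : Q)) * r} ∧
    EssentialInSet R
      {y : Q | ∃ x ∈ {z : Q | ∃ q : Q, z = g * q} ∩ (R : Set Q), y = (1 - (e : Q)) * x}
      {y : Q | ∃ x : Q, y = (1 - (e : Q)) * x} ∧
    EssentialInSet R
      {y : Q | ∃ x ∈ {z : Q | ∃ q : Q, z = g * q} ∩ (R : Set Q), y = (1 - (f : Q)) * x}
      {y : Q | ∃ r ∈ R, y = (1 - (f : Q)) * r} ∧
    EssentialInSet R
      {y : Q | ∃ x ∈ {z : Q | ∃ q : Q, z = g * q} ∩ (R : Set Q), y = (1 - (f : Q)) * x}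
      {y : Q | ∃ x : Q, y = (1 - (f : Q)) * x} :=
  one_sub_e_gQ_cap_R_essential_general Q R hRess e f he hf g hde hse hdf hsf
end

section
/- Let R be a von Neumann regular ring and Q a von Neumann regular, right self-injective ring containing R as a subring with R essential in Q as a right R-module (Q the maximal right quotient ring of R). The following conditions are equivalent: (1) R is unit regular; (2) R is perspective; (3) for any idempotents e, f ∈ R with eR ≅ fR as right R-modules, there exists a right ideal I of R such that eR ⊕ I = fR ⊕ I and this right ideal is essential in R; (4) for any idempotents e, f ∈ R with eR ≅ fR as right R-modules, there exists an idempotent g ∈ Q such that eR ⊕ (gQ ∩ R) = fR ⊕ (gQ ∩ R) and this right ideal is essential in R. -/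
/-- For a subring `R` of `Q` and `g : Q`, the right ideal `gQ ∩ R` of `R`,
as an `(↥R)ᵐᵒᵖ`-submodule of `R`. -/
def gQcapR {Q : Type*} [Ring Q] (R : Subring Q) (g : Q) : Submodule (↥R)ᵐᵒᵖ ↥R where
  carrier := {x : ↥R | ∃ q : Q, (x : Q) = g * q}
  zero_mem' := ⟨0, by simp⟩
  add_mem' := by
    rintro a b ⟨qa, ha⟩ ⟨qb, hb⟩
    exact ⟨qa + qb, by push_cast [ha, hb]; rw [mul_add]⟩
  smul_mem' := by
    rintro c x ⟨q, hq⟩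
    refine ⟨q * ((c.unop : ↥R) : Q), ?_⟩
    have hcx : c • x = x * c.unop := rfl
    rw [hcx]
    push_cast [hq]
    rw [mul_assoc]

open Submodule MulOpposite

def IsUnitRegularRing (A : Type*) [Ring A] : Prop :=
  ∀ a : A, ∃ u : Aˣ, a = a * u * a

def IsPerspectiveRing (A : Type*) [Ring A] : Prop :=
  ∀ e f : A, IsIdempotentElem e → IsIdempotentElem f →
    Nonempty (span Aᵐᵒᵖ {e} ≃ₗ[Aᵐᵒᵖ] span Aᵐᵒᵖ {f}) →
    ∃ g : A, IsIdempotentElem g ∧ IsCompl (span Aᵐᵒᵖ {e}) (span Aᵐᵒᵖ {g}) ∧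
      IsCompl (span Aᵐᵒᵖ {f}) (span Aᵐᵒᵖ {g})

theorem Submodule.essentialIn_top {R M : Type*} [Ring R] [AddCommGroup M] [Module R M] :
    (⊤ : Submodule R M).EssentialIn ⊤ :=
  ⟨le_rfl, fun _ _ hX => by rwa [inf_top_eq]⟩

theorem isCompl_inf_sup_of_le {α : Type*} [Lattice α] [BoundedOrder α] [IsModularLattice α]
    {E I H H' : α} (hEH : E ≤ H) (hHEI : H ≤ E ⊔ I) (hEI : Disjoint E I) (hH : IsCompl H H') :
    IsCompl E (I ⊓ H ⊔ H') := by
  have hX : (I ⊓ H ⊔ H') ⊓ H = I ⊓ H := by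
    rw [sup_inf_assoc_of_le _ inf_le_right, hH.disjoint.symm.eq_bot, sup_bot_eq]
  constructor
  · rw [disjoint_iff, ← inf_eq_left.mpr hEH, inf_assoc, inf_comm H, hX, ← inf_assoc,
      hEI.eq_bot, bot_inf_eq]
  · rw [codisjoint_iff, ← sup_assoc, ← sup_inf_assoc_of_le I hEH, inf_eq_right.mpr hHEI,
      codisjoint_iff.mp hH.codisjoint]

section RightIdeals

variable {A : Type*} [Ring A] {e f : A}

theorem Submodule.mul_mem_right {p : Submodule Aᵐᵒᵖ A} {x : A} (hx : x ∈ p) (r : A) :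
    x * r ∈ p :=
  p.smul_mem (op r) hx

theorem mul_mem_span_singleton_self (x r : A) : x * r ∈ span Aᵐᵒᵖ {x} :=
  mul_mem_right (mem_span_singleton_self x) r

theorem mem_span_singleton_iff_exists_mul {x y : A} : x ∈ span Aᵐᵒᵖ {y} ↔ ∃ r, y * r = x :=
  mem_span_singleton.trans ⟨fun ⟨c, hc⟩ => ⟨c.unop, hc⟩, fun ⟨r, hr⟩ => ⟨op r, hr⟩⟩

theorem IsIdempotentElem.mem_span_singleton_iff (he : IsIdempotentElem e) {x : A} :
    x ∈ span Aᵐᵒᵖ {e} ↔ e * x = x := by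
  refine ⟨fun hx => ?_, fun hx => hx ▸ mul_mem_span_singleton_self e x⟩
  obtain ⟨r, rfl⟩ := mem_span_singleton_iff_exists_mul.mp hx
  rw [← mul_assoc, he.eq]

theorem isCompl_span_singleton_one_sub_of_mul_eq {h d : A} (hh : IsIdempotentElem h)
    (hhfd : h * f * d = h) (hdhf : d * (h * f) = f) :
    IsCompl (span Aᵐᵒᵖ {f}) (span Aᵐᵒᵖ {1 - h}) := by
  constructor
  · refine disjoint_def.mpr fun x hxf hxh => ?_
    obtain ⟨r, rfl⟩ := mem_span_singleton_iff_exists_mul.mp hxf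
    have hhx : h * (f * r) = 0 := by
      rw [← hh.one_sub.mem_span_singleton_iff.mp hxh, ← mul_assoc, hh.mul_one_sub_self, zero_mul]
    calc f * r = d * (h * (f * r)) := by rw [← mul_assoc h, ← mul_assoc, hdhf]
      _ = 0 := by rw [hhx, mul_zero]
  · refine codisjoint_iff.mpr <| eq_top_iff.mpr fun r _ => mem_sup.mpr
      ⟨f * (d * (h * r)), mul_mem_span_singleton_self _ _, r - f * (d * (h * r)),
        hh.one_sub.mem_span_singleton_iff.mpr ?_, add_sub_cancel _ _⟩
    linear_combination (norm := noncomm_ring) hhfd * h * r + hh.eq * r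

theorem IsIdempotentElem.isCompl_span_singleton_one_sub {h : A} (hh : IsIdempotentElem h) :
    IsCompl (span Aᵐᵒᵖ {h}) (span Aᵐᵒᵖ {1 - h}) :=
  isCompl_span_singleton_one_sub_of_mul_eq hh (d := h) (by rw [hh.eq, hh.eq])
    (by rw [hh.eq, hh.eq])

theorem mul_eq_self_of_isCompl {E G : Submodule Aᵐᵒᵖ A} (hEG : IsCompl E G) {x y : A}
    (hx : x ∈ E) (hy : y ∈ G) (hxy : x + y = 1) : ∀ r ∈ E, x * r = r := by
  intro r hr
  have hsum : x * r + y * r = r := by rw [← add_mul, hxy, one_mul]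
  have hyr : y * r = 0 := by
    refine disjoint_def.mp hEG.disjoint _ ?_ (mul_mem_right hy r)
    rw [eq_sub_of_add_eq' hsum]
    exact E.sub_mem hr (mul_mem_right hx r)
  rwa [hyr, add_zero] at hsum

theorem span_singleton_eq_of_mul_eq_self {E : Submodule Aᵐᵒᵖ A} {x : A} (hx : x ∈ E)
    (hxE : ∀ r ∈ E, x * r = r) : span Aᵐᵒᵖ {x} = E :=
  le_antisymm ((span_singleton_le_iff_mem _ _).mpr hx) fun r hr =>
    hxE r hr ▸ mul_mem_span_singleton_self x r

theorem exists_isIdempotentElem_of_isCompl {E G : Submodule Aᵐᵒᵖ A} (hEG : IsCompl E G) :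
    ∃ p : A, IsIdempotentElem p ∧ span Aᵐᵒᵖ {p} = E ∧ span Aᵐᵒᵖ {1 - p} = G := by
  obtain ⟨x, hx, y, hy, hxy⟩ :=
    mem_sup.mp ((codisjoint_iff.mp hEG.codisjoint).symm ▸ mem_top : (1 : A) ∈ E ⊔ G)
  have hxE := mul_eq_self_of_isCompl hEG hx hy hxy
  have hyG := mul_eq_self_of_isCompl hEG.symm hy hx ((add_comm y x).trans hxy)
  obtain rfl : y = 1 - x := eq_sub_of_add_eq' hxy
  exact ⟨x, hxE x hx, span_singleton_eq_of_mul_eq_self hx hxE,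
    span_singleton_eq_of_mul_eq_self hy hyG⟩

theorem IsIdempotentElem.coe_linearMap_apply (he : IsIdempotentElem e) {N : Submodule Aᵐᵒᵖ A}
    (φ : span Aᵐᵒᵖ {e} →ₗ[Aᵐᵒᵖ] N) (x : span Aᵐᵒᵖ {e}) :
    (φ x : A) = φ ⟨e, mem_span_singleton_self e⟩ * x := by
  have hx : x = op (x : A) • ⟨e, mem_span_singleton_self e⟩ :=
    Subtype.ext (he.mem_span_singleton_iff.mp x.2).symm
  conv_lhs => rw [hx, map_smul]
  rfl

theorem exists_mul_eq_of_linearEquiv (he : IsIdempotentElem e) (hf : IsIdempotentElem f)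
    (ψ : span Aᵐᵒᵖ {e} ≃ₗ[Aᵐᵒᵖ] span Aᵐᵒᵖ {f}) :
    ∃ a b : A, a * b = e ∧ b * a = f ∧ e * a = a ∧ a * f = a ∧ b * e = b := by
  set e' : span Aᵐᵒᵖ {e} := ⟨e, mem_span_singleton_self e⟩
  set f' : span Aᵐᵒᵖ {f} := ⟨f, mem_span_singleton_self f⟩
  have hψ := he.coe_linearMap_apply ψ.toLinearMap
  have hψ' := hf.coe_linearMap_apply ψ.symm.toLinearMap
  refine ⟨ψ.symm f', ψ e', ?_, ?_, he.mem_span_singleton_iff.mp (ψ.symm f').2, ?_, ?_⟩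
  · simpa using (hψ' (ψ e')).symm
  · simpa using (hψ (ψ.symm f')).symm
  · simpa using (hψ' f').symm
  · simpa using (hψ e').symm

def mulLeftToSpan (p : Submodule Aᵐᵒᵖ A) (f b : A) (hfb : f * b = b) :
    p →ₗ[Aᵐᵒᵖ] span Aᵐᵒᵖ {f} where
  toFun x := ⟨b * x, by rw [← hfb, mul_assoc]; exact mul_mem_span_singleton_self _ _⟩
  map_add' x y := Subtype.ext (mul_add b x y)
  map_smul' c x := Subtype.ext (mul_assoc b x c.unop).symm

theorem nonempty_linearEquiv_of_mul_eq (he : IsIdempotentElem e) (hf : IsIdempotentElem f)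
    {a b : A} (hab : a * b = e) (hba : b * a = f) (hea : e * a = a) (hfb : f * b = b) :
    Nonempty (span Aᵐᵒᵖ {e} ≃ₗ[Aᵐᵒᵖ] span Aᵐᵒᵖ {f}) :=
  ⟨.ofLinearMap (mulLeftToSpan _ f b hfb) (mulLeftToSpan _ e a hea)
    (LinearMap.ext fun y => Subtype.ext <| show b * (a * y) = y by
      rw [← mul_assoc, hba, hf.mem_span_singleton_iff.mp y.2])
    (LinearMap.ext fun x => Subtype.ext <| show a * (b * x) = x by
      rw [← mul_assoc, hab, he.mem_span_singleton_iff.mp x.2])⟩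

end RightIdeals

section UnitRegular

variable {A : Type*} [Ring A] {e f : A}

theorem IsUnitRegularRing.corner (hA : IsUnitRegularRing A) (he : IsIdempotentElem e) :
    IsUnitRegularRing he.Corner := by
  rintro ⟨t, ht⟩
  obtain ⟨het, hte⟩ := (Subsemigroup.mem_corner_iff he).mp ht
  obtain ⟨u, hu⟩ := hA (t + (1 - e))
  have hpeirce (y z : A) : y * (t + (1 - e)) * u * ((t + (1 - e)) * z) =
      y * (t + (1 - e)) * z := by
    linear_combination (norm := noncomm_ring) -(y * hu * z)
  have htut : t * u * t = t := by
    simpa [mul_add, add_mul, mul_sub, sub_mul, het, hte, he.eq] using hpeirce e e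
  have htus : t * u * (1 - e) = 0 := by
    simpa [mul_add, add_mul, mul_sub, sub_mul, het, hte, he.eq] using hpeirce e (1 - e)
  have hsus : (1 - e) * u * (1 - e) = 1 - e := by
    simpa [mul_add, add_mul, mul_sub, sub_mul, het, hte, he.eq] using hpeirce (1 - e) (1 - e)
  refine ⟨⟨⟨e * u * e - e * u * (1 - e) * u * e, u - u * (1 - e) * u, by noncomm_ring⟩,
    ⟨e * ↑u⁻¹ * e, ↑u⁻¹, rfl⟩, Subtype.ext ?_, Subtype.ext ?_⟩, Subtype.ext ?_⟩
  · show (e * u * e - e * u * (1 - e) * u * e) * (e * ↑u⁻¹ * e) = e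
    linear_combination (norm := noncomm_ring) e * u * he.eq * ↑u⁻¹ * e + e * u.mul_inv * e +
      he.eq - e * u * (1 - e) * u * he.eq * ↑u⁻¹ * e - e * u * (1 - e) * u.mul_inv * e +
      e * u * hsus * ↑u⁻¹ * e + e * u * he.eq
  · show e * ↑u⁻¹ * e * (e * u * e - e * u * (1 - e) * u * e) = e
    linear_combination (norm := noncomm_ring) e * ↑u⁻¹ * he.eq * u * e -
      e * ↑u⁻¹ * he.eq * u * (1 - e) * u * e + e * u.inv_mul * e + he.eq -
      e * u.inv_mul * (1 - e) * u * e + he.eq * u * e + e * ↑u⁻¹ * hsus * u * e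
  · show t = t * (e * u * e - e * u * (1 - e) * u * e) * t
    linear_combination (norm := noncomm_ring) -htut - hte * u * e * t - t * u * het +
      hte * u * (1 - e) * u * e * t + t * u * (1 - e) * u * het + htus * u * t

theorem IsUnitRegularRing.exists_corner_unit_mul_eq (hA : IsUnitRegularRing A)
    (he : IsIdempotentElem e) (hf : IsIdempotentElem f) {a b : A} (hba : b * a = f)
    (hea : e * a = a) (haf : a * f = a) (hbe : b * e = b) :
    ∃ (w : he.Cornerˣ) (σ : A), e * σ = σ ∧ σ * e = 0 ∧ (w : he.Corner).1 * a = (e - σ) * f := by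
  have hebe : e * b * e = e * b := by rw [mul_assoc, hbe]
  set t : he.Corner := ⟨e * b, b, hebe⟩
  obtain ⟨ω, hω⟩ := hA.corner he t
  set o := (ω : he.Corner).1
  set v := (↑ω⁻¹ : he.Corner).1
  have hvo : v * o = e := congrArg Subtype.val ω.inv_mul
  have hev : e * v = v := ((Subsemigroup.mem_corner_iff he).mp (↑ω⁻¹ : he.Corner).2).1
  have hbob : e * b = e * b * o * (e * b) := congrArg Subtype.val hω
  set s : he.Corner := ⟨a * (e * b), a * (e * b), by
    show e * (a * (e * b)) * e = a * (e * b)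
    rw [← mul_assoc e a, hea, mul_assoc, hebe]⟩
  have hst : s * (1 - ω * t) = 0 := Subtype.ext <| by
    show a * (e * b) * (e - o * (e * b)) = 0
    linear_combination (norm := noncomm_ring) a * hebe + a * hbob
  have hn : IsNilpotent ((1 - ω * t) * s) :=
    ⟨2, by rw [pow_two, mul_assoc, ← mul_assoc s, hst, zero_mul, mul_zero]⟩
  -- `ω⁻¹ (1 - (1 - ω t) s) a = e f + (ω⁻¹ - e b) a (1 - e) f`, which determines `σ`.
  refine ⟨ω⁻¹ * hn.isUnit_one_sub.unit, -((v - e * b) * a * (1 - e)), ?_, ?_, ?_⟩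
  · linear_combination (norm := noncomm_ring) -(hev * a * (1 - e)) + he.eq * b * a * (1 - e)
  · linear_combination (norm := noncomm_ring) (v - e * b) * a * he.eq
  · show v * (e - (e - o * (e * b)) * (a * (e * b))) * a =
      (e - -((v - e * b) * a * (1 - e))) * f
    linear_combination (norm := noncomm_ring) v * hea - v * hea * e * b * a - v * a * e * hba +
      hvo * e * b * a * e * b * a + he.eq * b * a * e * b * a + e * hba * e * b * a +
      e * f * e * hba - v * haf + e * hba * f + e * hf.eq - e * hba * e * f

theorem IsUnitRegularRing.isPerspectiveRing (hA : IsUnitRegularRing A) :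
    IsPerspectiveRing A := by
  rintro e f he hf ⟨ψ⟩
  obtain ⟨a, b, hab, hba, hea, haf, hbe⟩ := exists_mul_eq_of_linearEquiv he hf ψ
  obtain ⟨w, σ, heσ, hσe, hwa⟩ := hA.exists_corner_unit_mul_eq he hf hba hea haf hbe
  set w₀ := (w : he.Corner).1
  set w₁ := (↑w⁻¹ : he.Corner).1
  have hw₀₁ : w₀ * w₁ = e := congrArg Subtype.val w.mul_inv
  have hw₁₀ : w₁ * w₀ = e := congrArg Subtype.val w.inv_mul
  have hw₀e : w₀ * e = w₀ := ((Subsemigroup.mem_corner_iff he).mp (w : he.Corner).2).2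
  have hh : IsIdempotentElem (e - σ) := by
    show (e - σ) * (e - σ) = e - σ
    linear_combination (norm := noncomm_ring) he.eq - heσ - hσe + hσe * σ - σ * heσ
  refine ⟨1 - (e - σ), hh.one_sub, isCompl_span_singleton_one_sub_of_mul_eq hh (d := e - σ) ?_ ?_,
    isCompl_span_singleton_one_sub_of_mul_eq hh (d := b * w₁ * (e - σ)) ?_ ?_⟩
  · linear_combination (norm := noncomm_ring) e * he.eq + he.eq - σ * he.eq - hσe - he.eq * σ -
      heσ + hσe * σ
  · linear_combination (norm := noncomm_ring) e * he.eq + he.eq - σ * he.eq - hσe - e * hσe +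
      σ * hσe
  · linear_combination (norm := noncomm_ring) -(hwa * b * w₁ * (e - σ)) + w₀ * hab * w₁ * (e - σ) +
      hw₀e * w₁ * (e - σ) + hw₀₁ * (e - σ) + he.eq - heσ
  · linear_combination (norm := noncomm_ring) b * w₁ * hh.eq * f - b * w₁ * hwa + b * hw₁₀ * a +
      hbe * a + hba

end UnitRegular

section Perspective

variable {A : Type*} [Ring A] {e f : A}

theorem mul_one_sub_eq_zero_of_span_eq {p q : A} (hp : IsIdempotentElem p)
    (hpq : span Aᵐᵒᵖ {1 - p} = span Aᵐᵒᵖ {1 - q}) : p * (1 - q) = 0 := by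
  have h : (1 - p) * (1 - q) = 1 - q :=
    hp.one_sub.mem_span_singleton_iff.mp (hpq ▸ mem_span_singleton_self (1 - q))
  rw [← h, ← mul_assoc, hp.mul_one_sub_self, zero_mul]

theorem exists_unit_mul_eq_of_isCompl (he : IsIdempotentElem e) (hf : IsIdempotentElem f)
    {a b g : A} (hab : a * b = e) (hba : b * a = f) (hea : e * a = a) (hfb : f * b = b)
    (hE : IsCompl (span Aᵐᵒᵖ {e}) (span Aᵐᵒᵖ {g}))
    (hF : IsCompl (span Aᵐᵒᵖ {f}) (span Aᵐᵒᵖ {g})) :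
    ∃ u : Aˣ, (u : A) * a = f := by
  obtain ⟨p, hp, hpe, hpg⟩ := exists_isIdempotentElem_of_isCompl hE
  obtain ⟨q, hq, hqf, hqg⟩ := exists_isIdempotentElem_of_isCompl hF
  have hpa : p * a = a := hp.mem_span_singleton_iff.mp (hpe ▸ hea ▸ mul_mem_span_singleton_self e a)
  have hqb : q * b = b := hq.mem_span_singleton_iff.mp (hqf ▸ hfb ▸ mul_mem_span_singleton_self f b)
  have hep : e * p = p := he.mem_span_singleton_iff.mp (hpe ▸ mem_span_singleton_self p)
  have hfq : f * q = q := hf.mem_span_singleton_iff.mp (hqf ▸ mem_span_singleton_self q)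
  have hpq := mul_one_sub_eq_zero_of_span_eq hp (hpg.trans hqg.symm)
  have hqp := mul_one_sub_eq_zero_of_span_eq hq (hqg.trans hpg.symm)
  refine ⟨⟨b * p + (1 - p), a * q + (1 - q), ?_, ?_⟩, ?_⟩
  · linear_combination (norm := noncomm_ring) b * hpa * q + hba * q + hfq + b * hpq - hpa * q - hpq
  · linear_combination (norm := noncomm_ring) a * hqb * p + hab * p + hep + a * hqp - hqb * p - hqp
  · linear_combination (norm := noncomm_ring) b * hpa + hba - hpa

theorem IsPerspectiveRing.isUnitRegularRing (hA : IsVonNeumannRegularRing A)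
    (hP : IsPerspectiveRing A) : IsUnitRegularRing A := by
  intro x
  obtain ⟨y, hy⟩ := hA x
  have he : IsIdempotentElem (x * y) := by
    show x * y * (x * y) = x * y
    linear_combination (norm := noncomm_ring) -(hy * y)
  have hf : IsIdempotentElem (y * x) := by
    show y * x * (y * x) = y * x
    linear_combination (norm := noncomm_ring) -(y * hy)
  have hab : x * (y * x * y) = x * y := by linear_combination (norm := noncomm_ring) -(hy * y)
  have hba : y * x * y * x = y * x := by linear_combination (norm := noncomm_ring) -(y * hy)
  have hfb : y * x * (y * x * y) = y * x * y := by
    linear_combination (norm := noncomm_ring) -(y * hy * y)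
  obtain ⟨g, -, hE, hF⟩ :=
    hP _ _ he hf (nonempty_linearEquiv_of_mul_eq he hf hab hba hy.symm hfb)
  obtain ⟨u, hu⟩ := exists_unit_mul_eq_of_isCompl he hf hab hba hy.symm hfb hE hF
  exact ⟨u, by rw [mul_assoc, hu, ← mul_assoc, ← hy]⟩

theorem IsVonNeumannRegularRing.exists_span_singleton_eq_sup (hA : IsVonNeumannRegularRing A)
    (he : IsIdempotentElem e) :
    ∃ h : A, IsIdempotentElem h ∧ span Aᵐᵒᵖ {h} = span Aᵐᵒᵖ {e} ⊔ span Aᵐᵒᵖ {f} := by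
  obtain ⟨z, hz⟩ := hA ((1 - e) * f)
  obtain ⟨k, hk⟩ : ∃ k, k = (1 - e) * f * z := ⟨_, rfl⟩
  have hkk : k * k = k := by rw [hk]; linear_combination (norm := noncomm_ring) -(hz * z)
  have hek : e * k = 0 := by rw [hk]; linear_combination (norm := noncomm_ring) -(he.eq * f * z)
  have hkf : k * ((1 - e) * f) = (1 - e) * f := by rw [hk]; exact hz.symm
  refine ⟨e + k * (1 - e), ?_, le_antisymm ?_ (sup_le ?_ ?_)⟩
  · show _ * _ = _
    linear_combination (norm := noncomm_ring) he.eq + hek - hek * e + hkk - hkk * e - k * he.eq -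
      k * hek + k * hek * e
  · refine (span_singleton_le_iff_mem _ _).mpr (mem_sup.mpr ⟨e * (1 - f * z * (1 - e)),
      mul_mem_span_singleton_self _ _, f * (z * (1 - e)), mul_mem_span_singleton_self _ _, ?_⟩)
    rw [hk]
    noncomm_ring
  · refine (span_singleton_le_iff_mem _ _).mpr (mem_span_singleton_iff_exists_mul.mpr ⟨e, ?_⟩)
    linear_combination (norm := noncomm_ring) he.eq - k * he.eq
  · refine (span_singleton_le_iff_mem _ _).mpr (mem_span_singleton_iff_exists_mul.mpr ⟨f, ?_⟩)
    linear_combination (norm := noncomm_ring) hkf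

theorem IsVonNeumannRegularRing.exists_isCompl_isCompl_of_sup_eq
    (hA : IsVonNeumannRegularRing A) (he : IsIdempotentElem e) {I : Submodule Aᵐᵒᵖ A}
    (hEI : span Aᵐᵒᵖ {e} ⊓ I = ⊥) (hFI : span Aᵐᵒᵖ {f} ⊓ I = ⊥)
    (hEF : span Aᵐᵒᵖ {e} ⊔ I = span Aᵐᵒᵖ {f} ⊔ I) :
    ∃ g : A, IsIdempotentElem g ∧ IsCompl (span Aᵐᵒᵖ {e}) (span Aᵐᵒᵖ {g}) ∧
      IsCompl (span Aᵐᵒᵖ {f}) (span Aᵐᵒᵖ {g}) := by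
  obtain ⟨h, hh, hH⟩ := hA.exists_span_singleton_eq_sup (f := f) he
  have hE := isCompl_inf_sup_of_le (hH ▸ le_sup_left)
    (hH ▸ sup_le le_sup_left (le_sup_left.trans hEF.ge)) (disjoint_iff.mpr hEI)
    hh.isCompl_span_singleton_one_sub
  have hF := isCompl_inf_sup_of_le (hH ▸ le_sup_right)
    (hH ▸ sup_le (le_sup_left.trans hEF.le) le_sup_left) (disjoint_iff.mpr hFI)
    hh.isCompl_span_singleton_one_sub
  obtain ⟨p, hp, -, hpG⟩ := exists_isIdempotentElem_of_isCompl hE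
  exact ⟨1 - p, hp.one_sub, hpG ▸ hE, hpG ▸ hF⟩

end Perspective

theorem gQcapR_eq_span_singleton {Q : Type*} [Ring Q] {R : Subring Q} {g : R}
    (hg : IsIdempotentElem g) : gQcapR R g = span Rᵐᵒᵖ {g} := by
  ext x
  rw [hg.mem_span_singleton_iff]
  constructor
  · rintro ⟨q, hq⟩
    exact Subtype.ext <| show (g : Q) * x = x by
      rw [hq, ← mul_assoc, show (g : Q) * g = g from congrArg Subtype.val hg.eq]
  · exact fun hx => ⟨x, (congrArg Subtype.val hx).symm⟩

theorem unit_regular_tfae_general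
    (Q : Type*) [Ring Q]
    (R : Subring Q) (hRreg : IsVonNeumannRegularRing ↥R) :
    List.TFAE
      [∀ a : ↥R, ∃ u : (↥R)ˣ, a = a * u * a,
       ∀ e f : ↥R, IsIdempotentElem e → IsIdempotentElem f →
         Nonempty ((Submodule.span (↥R)ᵐᵒᵖ {e} : Submodule (↥R)ᵐᵒᵖ ↥R) ≃ₗ[(↥R)ᵐᵒᵖ]
           (Submodule.span (↥R)ᵐᵒᵖ {f} : Submodule (↥R)ᵐᵒᵖ ↥R)) →
         ∃ g : ↥R, IsIdempotentElem g ∧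
           IsCompl (Submodule.span (↥R)ᵐᵒᵖ {e}) (Submodule.span (↥R)ᵐᵒᵖ {g}) ∧
           IsCompl (Submodule.span (↥R)ᵐᵒᵖ {f}) (Submodule.span (↥R)ᵐᵒᵖ {g}),
       ∀ e f : ↥R, IsIdempotentElem e → IsIdempotentElem f →
         Nonempty ((Submodule.span (↥R)ᵐᵒᵖ {e} : Submodule (↥R)ᵐᵒᵖ ↥R) ≃ₗ[(↥R)ᵐᵒᵖ]
           (Submodule.span (↥R)ᵐᵒᵖ {f} : Submodule (↥R)ᵐᵒᵖ ↥R)) →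
         ∃ I : Submodule (↥R)ᵐᵒᵖ ↥R,
           Submodule.span (↥R)ᵐᵒᵖ {e} ⊓ I = ⊥ ∧
           Submodule.span (↥R)ᵐᵒᵖ {f} ⊓ I = ⊥ ∧
           Submodule.span (↥R)ᵐᵒᵖ {e} ⊔ I = Submodule.span (↥R)ᵐᵒᵖ {f} ⊔ I ∧
           (Submodule.span (↥R)ᵐᵒᵖ {e} ⊔ I).EssentialIn ⊤,
       ∀ e f : ↥R, IsIdempotentElem e → IsIdempotentElem f →
         Nonempty ((Submodule.span (↥R)ᵐᵒᵖ {e} : Submodule (↥R)ᵐᵒᵖ ↥R) ≃ₗ[(↥R)ᵐᵒᵖ]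
           (Submodule.span (↥R)ᵐᵒᵖ {f} : Submodule (↥R)ᵐᵒᵖ ↥R)) →
         ∃ g : Q, IsIdempotentElem g ∧
           Submodule.span (↥R)ᵐᵒᵖ {e} ⊓ gQcapR R g = ⊥ ∧
           Submodule.span (↥R)ᵐᵒᵖ {f} ⊓ gQcapR R g = ⊥ ∧
           Submodule.span (↥R)ᵐᵒᵖ {e} ⊔ gQcapR R g =
             Submodule.span (↥R)ᵐᵒᵖ {f} ⊔ gQcapR R g ∧
           (Submodule.span (↥R)ᵐᵒᵖ {e} ⊔ gQcapR R g).EssentialIn ⊤] := by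
  tfae_have 1 → 2 := IsUnitRegularRing.isPerspectiveRing
  tfae_have 2 → 1 := IsPerspectiveRing.isUnitRegularRing hRreg
  tfae_have 2 → 4 := by
    intro h2 e f he hf hiso
    obtain ⟨g, hg, hE, hF⟩ := h2 e f he hf hiso
    refine ⟨g, congrArg Subtype.val hg.eq, ?_⟩
    rw [gQcapR_eq_span_singleton hg, codisjoint_iff.mp hE.codisjoint,
      codisjoint_iff.mp hF.codisjoint]
    exact ⟨hE.disjoint.eq_bot, hF.disjoint.eq_bot, rfl, essentialIn_top⟩
  tfae_have 4 → 3 := fun h4 e f he hf hiso =>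
    let ⟨g, _, hg⟩ := h4 e f he hf hiso
    ⟨gQcapR R g, hg⟩
  tfae_have 3 → 2 := fun h3 e f he hf hiso =>
    let ⟨_, hEI, hFI, hEF, _⟩ := h3 e f he hf hiso
    hRreg.exists_isCompl_isCompl_of_sup_eq he hEI hFI hEF
  tfae_finish

/-- Let `R` be a von Neumann regular subring of its maximal right quotient ring `Q`
(a von Neumann regular, right self-injective ring in which `R` is essential as a right
`R`-module).  The following are equivalent:
(1) `R` is unit regular;
(2) `R` is perspective: for idempotents `e, f` of `R` with `eR ≅ fR` there is an
    idempotent `g ∈ R` with `eR ⊕ gR = R = fR ⊕ gR`;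
(3) for idempotents `e, f` of `R` with `eR ≅ fR` there is a right ideal `I` of `R` with
    `eR ⊕ I = fR ⊕ I`, this right ideal being essential in `R`;
(4) for idempotents `e, f` of `R` with `eR ≅ fR` there is an idempotent `g ∈ Q` with
    `eR ⊕ (gQ ∩ R) = fR ⊕ (gQ ∩ R)`, this right ideal being essential in `R`. -/
theorem unit_regular_tfae
    (Q : Type*) [Ring Q] (hQreg : IsVonNeumannRegularRing Q)
    (hQinj : Module.Injective Qᵐᵒᵖ Q)
    (R : Subring Q) (hRreg : IsVonNeumannRegularRing ↥R)
    (hRess : EssentialInSet R (R : Set Q) Set.univ) :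
    List.TFAE
      [∀ a : ↥R, ∃ u : (↥R)ˣ, a = a * u * a,
       ∀ e f : ↥R, IsIdempotentElem e → IsIdempotentElem f →
         Nonempty ((Submodule.span (↥R)ᵐᵒᵖ {e} : Submodule (↥R)ᵐᵒᵖ ↥R) ≃ₗ[(↥R)ᵐᵒᵖ]
           (Submodule.span (↥R)ᵐᵒᵖ {f} : Submodule (↥R)ᵐᵒᵖ ↥R)) →
         ∃ g : ↥R, IsIdempotentElem g ∧
           IsCompl (Submodule.span (↥R)ᵐᵒᵖ {e}) (Submodule.span (↥R)ᵐᵒᵖ {g}) ∧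
           IsCompl (Submodule.span (↥R)ᵐᵒᵖ {f}) (Submodule.span (↥R)ᵐᵒᵖ {g}),
       ∀ e f : ↥R, IsIdempotentElem e → IsIdempotentElem f →
         Nonempty ((Submodule.span (↥R)ᵐᵒᵖ {e} : Submodule (↥R)ᵐᵒᵖ ↥R) ≃ₗ[(↥R)ᵐᵒᵖ]
           (Submodule.span (↥R)ᵐᵒᵖ {f} : Submodule (↥R)ᵐᵒᵖ ↥R)) →
         ∃ I : Submodule (↥R)ᵐᵒᵖ ↥R,
           Submodule.span (↥R)ᵐᵒᵖ {e} ⊓ I = ⊥ ∧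
           Submodule.span (↥R)ᵐᵒᵖ {f} ⊓ I = ⊥ ∧
           Submodule.span (↥R)ᵐᵒᵖ {e} ⊔ I = Submodule.span (↥R)ᵐᵒᵖ {f} ⊔ I ∧
           (Submodule.span (↥R)ᵐᵒᵖ {e} ⊔ I).EssentialIn ⊤,
       ∀ e f : ↥R, IsIdempotentElem e → IsIdempotentElem f →
         Nonempty ((Submodule.span (↥R)ᵐᵒᵖ {e} : Submodule (↥R)ᵐᵒᵖ ↥R) ≃ₗ[(↥R)ᵐᵒᵖ]
           (Submodule.span (↥R)ᵐᵒᵖ {f} : Submodule (↥R)ᵐᵒᵖ ↥R)) →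
         ∃ g : Q, IsIdempotentElem g ∧
           Submodule.span (↥R)ᵐᵒᵖ {e} ⊓ gQcapR R g = ⊥ ∧
           Submodule.span (↥R)ᵐᵒᵖ {f} ⊓ gQcapR R g = ⊥ ∧
           Submodule.span (↥R)ᵐᵒᵖ {e} ⊔ gQcapR R g =
             Submodule.span (↥R)ᵐᵒᵖ {f} ⊔ gQcapR R g ∧
           (Submodule.span (↥R)ᵐᵒᵖ {e} ⊔ gQcapR R g).EssentialIn ⊤] :=
  unit_regular_tfae_general Q R hRreg
end

section
/- Let F be a field, let Q be the ring of all ℕ×ℕ column-finite matrices over F (equivalently, the ring of F-linear endomorphisms of a vector space with countably infinite basis), let K be the socle of Q (the set of finite-rank elements of Q), let D be the ring of all diagonal matrices over F, and let R = K + D. Let e = diag(1,0,1,0,…) ∈ R. Then: R is a von Neumann regular ring; I = eK and I′ = (1−e)K are isomorphic as right R-modules, with essential closures in R equal to eR = eQ ∩ R and (1−e)R = (1−e)Q ∩ R respectively; and there is no injective right R-module homomorphism from eR to (1−e)R. -/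
/-- `A` is a closed right `R`-submodule set of `R`: it has no proper essential
extension among right `R`-submodules of `R`. -/
def IsClosedInSet {Q : Type*} [Ring Q] (R : Subring Q) (A : Set Q) : Prop :=
  ∀ X : Set Q, IsRightSubmodSet R X → X ⊆ (R : Set Q) → EssentialInSet R A X → X = A

/-- `A` and `B` are isomorphic as right `R`-modules: there is an additive,
right-`R`-equivariant bijection from `A` onto `B`. -/
def RIsoSet {Q : Type*} [Ring Q] (R : Subring Q) (A B : Set Q) : Prop :=
  ∃ φ : Q → Q, Set.BijOn φ A B ∧ (∀ a ∈ A, ∀ b ∈ A, φ (a + b) = φ a + φ b) ∧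
    ∀ a ∈ A, ∀ r ∈ R, φ (a * r) = φ a * r

variable (F : Type*) [Field F]

/-- `Q`: the ring of `ℕ×ℕ` column-finite matrices over `F`, realized as the ring of
`F`-linear endomorphisms of the vector space `ℕ →₀ F` with countably infinite basis. -/
abbrev ColFinQ := Module.End F (ℕ →₀ F)

/-- `K = socle Q`: the finite-rank endomorphisms. -/
def finRankSet : Set (ColFinQ F) := {f | Module.Finite F ↥(LinearMap.range f)}

/-- `D`: the diagonal matrices, i.e. the endomorphisms mapping each standard basis
vector to a scalar multiple of itself. -/
def diagSet : Set (ColFinQ F) :=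
  {f | ∀ n : ℕ, ∃ c : F, f (Finsupp.single n 1) = c • Finsupp.single n 1}

/-- The subring `R = K + D` of `Q`. -/
noncomputable def OMearaR : Subring (ColFinQ F) where
  carrier := {f | ∃ k ∈ finRankSet F, ∃ d ∈ diagSet F, f = k + d}
  zero_mem' := by
    refine ⟨0, ?_, 0, fun n => ⟨0, by simp⟩, by simp⟩
    show Module.Finite F ↥(LinearMap.range (0 : ColFinQ F))
    rw [LinearMap.range_zero]
    infer_instance
  one_mem' := by
    refine ⟨0, ?_, 1, fun n => ⟨1, by simp⟩, by simp⟩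
    show Module.Finite F ↥(LinearMap.range (0 : ColFinQ F))
    rw [LinearMap.range_zero]
    infer_instance
  add_mem' := by
    rintro a b ⟨k1, hk1, d1, hd1, rfl⟩ ⟨k2, hk2, d2, hd2, rfl⟩
    refine ⟨k1 + k2, ?_, d1 + d2, ?_, by abel⟩
    · haveI : Module.Finite F ↥(LinearMap.range k1) := hk1
      haveI : Module.Finite F ↥(LinearMap.range k2) := hk2
      have hle : LinearMap.range (k1 + k2) ≤ LinearMap.range k1 ⊔ LinearMap.range k2 := by
        rintro y ⟨x, rfl⟩
        exact Submodule.add_mem_sup ⟨x, rfl⟩ ⟨x, rfl⟩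
      exact Submodule.finiteDimensional_of_le hle
    · intro n
      obtain ⟨c1, hc1⟩ := hd1 n
      obtain ⟨c2, hc2⟩ := hd2 n
      exact ⟨c1 + c2, by simp [hc1, hc2, add_smul]⟩
  neg_mem' := by
    rintro a ⟨k, hk, d, hd, rfl⟩
    refine ⟨-k, ?_, -d, ?_, by abel⟩
    · show Module.Finite F ↥(LinearMap.range (-k))
      rw [LinearMap.range_neg]
      exact hk
    · intro n
      obtain ⟨c, hc⟩ := hd n
      exact ⟨-c, by simp [hc]⟩
  mul_mem' := by
    rintro a b ⟨k1, hk1, d1, hd1, rfl⟩ ⟨k2, hk2, d2, hd2, rfl⟩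
    have hK_left : ∀ k x : ColFinQ F, k ∈ finRankSet F → k * x ∈ finRankSet F := by
      intro k x hk
      haveI : Module.Finite F ↥(LinearMap.range k) := hk
      have hle : LinearMap.range (k * x) ≤ LinearMap.range k := by
        rintro y ⟨z, rfl⟩
        exact ⟨x z, rfl⟩
      exact Submodule.finiteDimensional_of_le hle
    have hK_right : ∀ x k : ColFinQ F, k ∈ finRankSet F → x * k ∈ finRankSet F := by
      intro x k hk
      haveI : Module.Finite F ↥(LinearMap.range k) := hk
      have : LinearMap.range (x * k) = Submodule.map x (LinearMap.range k) := by
        rw [Module.End.mul_eq_comp, LinearMap.range_comp]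
      show Module.Finite F ↥(LinearMap.range (x * k))
      rw [this]
      exact Module.Finite.map _ _
    refine ⟨k1 * k2 + k1 * d2 + d1 * k2, ?_, d1 * d2, ?_, by noncomm_ring⟩
    · have h1 := hK_left k1 k2 hk1
      have h2 := hK_left k1 d2 hk1
      have h3 := hK_right d1 k2 hk2
      haveI i1 : Module.Finite F ↥(LinearMap.range (k1 * k2)) := h1
      haveI i2 : Module.Finite F ↥(LinearMap.range (k1 * d2)) := h2
      haveI i3 : Module.Finite F ↥(LinearMap.range (d1 * k2)) := h3
      have hle : LinearMap.range (k1 * k2 + k1 * d2 + d1 * k2) ≤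
          (LinearMap.range (k1 * k2) ⊔ LinearMap.range (k1 * d2)) ⊔
            LinearMap.range (d1 * k2) := by
        rintro y ⟨x, rfl⟩
        exact Submodule.add_mem_sup (Submodule.add_mem_sup ⟨x, rfl⟩ ⟨x, rfl⟩) ⟨x, rfl⟩
      exact Submodule.finiteDimensional_of_le hle
    · intro n
      obtain ⟨c1, hc1⟩ := hd1 n
      obtain ⟨c2, hc2⟩ := hd2 n
      refine ⟨c2 * c1, ?_⟩
      show d1 (d2 (Finsupp.single n 1)) = (c2 * c1) • Finsupp.single n 1
      rw [hc2, map_smul, hc1, smul_smul]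

/-- The idempotent `e = diag(1,0,1,0,…)` of `R`. -/
noncomputable def diagE : ColFinQ F :=
  Finsupp.lsum F fun n => if Even n then Finsupp.lsingle n else 0

/-!
`R = K + D` is regular because `K` is a regular ideal and `R/K` is a quotient of the commutative
regular ring `D`: if `d c d = d` then `a - a c a ∈ K` for `a = k + d`, and an inner inverse of
`a - a c a` in `K` corrects `c` to an inner inverse of `a`.

The shifts `σ : e_{2n} ↦ e_{2n+1}` and `τ : e_{2n+1} ↦ e_{2n}` satisfy `τσ = e`, `στ = 1 - e`,
so left multiplication by `σ` maps `eK` onto `(1 - e)K`. But a homomorphism `φ : eR → (1 - e)R`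
is left multiplication by `φ e ∈ (1 - e)Re`, and `(1 - e)De = 0` forces `φ e ∈ K`. A finite-rank
map kills a nonzero vector `v` of the infinite-dimensional space `e V`, so `φ` kills the nonzero
rank-one element `x ↦ x₀ v` of `eK`.
-/

open LinearMap

namespace Module.End

variable {K V : Type*} [DivisionRing K] [AddCommGroup V] [Module K V]

theorem finite_range_add {f g : End K V} (hf : Module.Finite K (range f))
    (hg : Module.Finite K (range g)) : Module.Finite K (range (f + g)) :=
  Submodule.finiteDimensional_of_le (range_add_le f g)

theorem finite_range_neg {f : End K V} (hf : Module.Finite K (range f)) :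
    Module.Finite K (range (-f)) := by
  rwa [range_neg]

theorem finite_range_sub {f g : End K V} (hf : Module.Finite K (range f))
    (hg : Module.Finite K (range g)) : Module.Finite K (range (f - g)) := by
  rw [sub_eq_add_neg]
  exact finite_range_add hf (finite_range_neg hg)

theorem finite_range_mul_left (x : End K V) {k : End K V} (hk : Module.Finite K (range k)) :
    Module.Finite K (range (x * k)) := by
  rw [mul_eq_comp, range_comp]
  infer_instance

theorem finite_range_mul_right {k : End K V} (hk : Module.Finite K (range k)) (x : End K V) :
    Module.Finite K (range (k * x)) :=
  Submodule.finiteDimensional_of_le (range_comp_le_range x k)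

theorem finite_range_smulRight (f : V →ₗ[K] K) (v : V) :
    Module.Finite K (range (f.smulRight v)) := by
  refine Submodule.finiteDimensional_of_le (S₂ := K ∙ v) ?_
  rintro _ ⟨x, rfl⟩
  exact Submodule.smul_mem _ _ (Submodule.mem_span_singleton_self v)

/-- `u = g ∘ π`, where `g` is a section of `k : V → range k` and `π` a retraction onto `range k`. -/
theorem exists_finite_range_mul_mul_eq {k : End K V} (hk : Module.Finite K (range k)) :
    ∃ u : End K V, Module.Finite K (range u) ∧ k * u * k = k := by
  obtain ⟨g, hg⟩ := k.rangeRestrict.exists_rightInverse_of_surjective (range_rangeRestrict k)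
  obtain ⟨π, hπ⟩ := (range k).subtype.exists_leftInverse_of_injective (Submodule.ker_subtype _)
  refine ⟨g ∘ₗ π, Submodule.finiteDimensional_of_le (range_comp_le_range π g), ?_⟩
  ext x
  have hπk : π (k x) = k.rangeRestrict x := congr($hπ (k.rangeRestrict x))
  have hkg : ∀ y, k (g y) = y := fun y => congr(Subtype.val ($hg y))
  simp [hπk, hkg]

theorem exists_ne_zero_apply_eq_zero {W : Type*} [AddCommGroup W] [Module K W]
    (hV : ¬ Module.Finite K V) (f : V →ₗ[K] W) (hf : Module.Finite K (range f)) :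
    ∃ v ≠ 0, f v = 0 := by
  by_contra! h
  have hinj : Function.Injective f.rangeRestrict :=
    (injective_iff_map_eq_zero _).2 fun v hv => by
      by_contra hv0
      exact h v hv0 congr(Subtype.val $hv)
  exact hV (FiniteDimensional.of_injective _ hinj)

end Module.End

section RingLemmas

variable {Q : Type*} [Ring Q]

theorem mul_mul_eq_of_sub_mul_mul {a c u : Q}
    (h : (a - a * c * a) * u * (a - a * c * a) = a - a * c * a) :
    a * (c + u - c * a * u - u * a * c + c * a * u * a * c) * a = a := by
  have key : a * (c + u - c * a * u - u * a * c + c * a * u * a * c) * a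
      = a * c * a + (a - a * c * a) * u * (a - a * c * a) := by noncomm_ring
  rw [key, h, add_sub_cancel]

theorem add_sub_mul_mul_add_eq {k d c : Q} (h : d * c * d = d) :
    k + d - (k + d) * c * (k + d) = k - k * (c * (k + d)) - d * c * k :=
  calc _ = k - k * (c * (k + d)) - d * c * k + (d - d * c * d) := by noncomm_ring
    _ = _ := by rw [h, sub_self, add_zero]

theorem isClosedInSet_mul_of_isIdempotentElem (R : Subring Q) {f : Q}
    (hf : IsIdempotentElem f) : IsClosedInSet R {y | ∃ r ∈ R, y = f * r} := by
  intro X hX hXR hess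
  refine Set.Subset.antisymm (fun x hxX => ?_) hess.1
  by_contra hx
  have hfxX : f * x ∈ X := hess.1 ⟨x, hXR hxX, rfl⟩
  have hy0 : x - f * x ≠ 0 := fun h => hx ⟨x, hXR hxX, sub_eq_zero.1 h⟩
  -- the elements of `X` killed by `f` form a submodule meeting `fR` only in `0`
  have hY : IsRightSubmodSet R {z | z ∈ X ∧ f * z = 0} := by
    refine ⟨⟨hX.1, mul_zero f⟩, ?_, ?_, ?_⟩
    · rintro a ⟨haX, ha⟩ b ⟨hbX, hb⟩
      exact ⟨hX.2.1 a haX b hbX, by rw [mul_add, ha, hb, add_zero]⟩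
    · rintro a ⟨haX, ha⟩
      exact ⟨hX.2.2.1 a haX, by rw [mul_neg, ha, neg_zero]⟩
    · rintro a ⟨haX, ha⟩ r hr
      exact ⟨hX.2.2.2 a haX r hr, by rw [← mul_assoc, ha, zero_mul]⟩
  have hyX : x - f * x ∈ X := by
    rw [sub_eq_add_neg]
    exact hX.2.1 x hxX _ (hX.2.2.1 _ hfxX)
  have hfy : f * (x - f * x) = 0 := by rw [mul_sub, ← mul_assoc, hf.eq, sub_self]
  obtain ⟨z, hzY, ⟨r, -, rfl⟩, hz0⟩ := hess.2 _ hY (fun z hz => hz.1) ⟨_, ⟨hyX, hfy⟩, hy0⟩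
  exact hz0 (by rw [← hf.eq, mul_assoc, hzY.2])

theorem mul_subring_eq_inter_of_isIdempotentElem (R : Subring Q) {f : Q} (hfR : f ∈ R)
    (hf : IsIdempotentElem f) :
    {y | ∃ r ∈ R, y = f * r} = {y | ∃ q : Q, y = f * q} ∩ (R : Set Q) := by
  ext y
  constructor
  · rintro ⟨r, hr, rfl⟩
    exact ⟨⟨r, rfl⟩, R.mul_mem hfR hr⟩
  · rintro ⟨⟨q, rfl⟩, hy⟩
    exact ⟨f * q, hy, by rw [← mul_assoc, hf.eq]⟩

theorem rIsoSet_mul_of_mul_eq (R : Subring Q) {K : Set Q}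
    (hK : ∀ q k, k ∈ K → q * k ∈ K) {e f σ τ : Q} (hτσ : τ * σ = e) (hστ : σ * τ = f)
    (hσe : σ * e = σ) : RIsoSet R {y | ∃ k ∈ K, y = e * k} {y | ∃ k ∈ K, y = f * k} := by
  have hfσ : f * σ = σ := by rw [← hστ, mul_assoc, hτσ, hσe]
  have hτσe : ∀ k, τ * (σ * (e * k)) = e * k := fun k => by
    rw [← mul_assoc σ, hσe, ← mul_assoc, hτσ]
  refine ⟨(σ * ·), ⟨?_, ?_, ?_⟩, fun a _ b _ => mul_add σ a b,
    fun a _ r _ => (mul_assoc σ a r).symm⟩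
  · rintro _ ⟨k, hk, rfl⟩
    exact ⟨σ * k, hK σ k hk, by simp only; rw [← mul_assoc, hσe, ← mul_assoc, hfσ]⟩
  · rintro _ ⟨k₁, -, rfl⟩ _ ⟨k₂, -, rfl⟩ h
    rw [← hτσe k₁, ← hτσe k₂]
    exact congrArg (τ * ·) h
  · rintro _ ⟨k, hk, rfl⟩
    exact ⟨e * (τ * k), ⟨τ * k, hK τ k hk, rfl⟩, by
      simp only; rw [← mul_assoc, hσe, ← mul_assoc, hστ]⟩

end RingLemmas

section OMeara

variable {F}

open Finsupp Module.End

theorem colFinQ_ext {f g : ColFinQ F} (h : ∀ n, f (single n 1) = g (single n 1)) : f = g :=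
  Finsupp.basisSingleOne.ext fun n => by simpa using h n

theorem exists_apply_single_ne_zero {x : ColFinQ F} (hx : x ≠ 0) :
    ∃ m, x (single m 1) ≠ 0 := by
  by_contra! h
  exact hx (colFinQ_ext fun n => by simp [h n])

theorem commute_of_mem_diagSet {d₁ d₂ : ColFinQ F} (h₁ : d₁ ∈ diagSet F)
    (h₂ : d₂ ∈ diagSet F) : Commute d₁ d₂ := by
  refine colFinQ_ext fun n => ?_
  obtain ⟨c₁, hc₁⟩ := h₁ n
  obtain ⟨c₂, hc₂⟩ := h₂ n
  simp only [Module.End.mul_apply, hc₁, hc₂, map_smul, smul_smul, mul_comm]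

theorem exists_mem_diagSet_mul_mul_eq {d : ColFinQ F} (hd : d ∈ diagSet F) :
    ∃ c ∈ diagSet F, d * c * d = d := by
  choose a ha using hd
  let c : ColFinQ F := lsum F fun n => (a n)⁻¹ • lsingle n
  have hc : ∀ n, c (single n 1) = (a n)⁻¹ • single n 1 := fun n => by simp [c]
  refine ⟨c, fun n => ⟨_, hc n⟩, colFinQ_ext fun n => ?_⟩
  simp only [Module.End.mul_apply, ha, hc, map_smul, smul_smul, ← mul_assoc, mul_inv_mul_cancel]

theorem diagE_single (n : ℕ) :
    diagE F (single n 1) = if Even n then single n 1 else 0 := by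
  simp only [diagE, Finsupp.lsum_single]
  split <;> simp

theorem diagE_mem_diagSet : diagE F ∈ diagSet F := fun n =>
  ⟨if Even n then 1 else 0, by rw [diagE_single]; split <;> simp⟩

theorem isIdempotentElem_diagE : IsIdempotentElem (diagE F) := colFinQ_ext fun n => by
  rw [Module.End.mul_apply, diagE_single]
  split <;> simp [diagE_single, *]

theorem mem_OMearaR {f : ColFinQ F} :
    f ∈ OMearaR F ↔ ∃ k ∈ finRankSet F, ∃ d ∈ diagSet F, f = k + d := Iff.rfl

theorem finRankSet_subset_OMearaR : finRankSet F ⊆ OMearaR F := fun k hk =>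
  ⟨k, hk, 0, fun _ => ⟨0, by simp⟩, (add_zero k).symm⟩

theorem diagSet_subset_OMearaR : diagSet F ⊆ OMearaR F := fun d hd =>
  ⟨0, by rw [finRankSet, Set.mem_ofPred_eq, range_zero]; infer_instance, d, hd, (zero_add d).symm⟩

theorem diagE_mem_OMearaR : diagE F ∈ OMearaR F := diagSet_subset_OMearaR diagE_mem_diagSet

theorem isVonNeumannRegularRing_OMearaR : IsVonNeumannRegularRing (OMearaR F) := by
  rintro ⟨a, ha⟩
  obtain ⟨k, hk, d, hd, rfl⟩ := mem_OMearaR.1 ha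
  obtain ⟨c, hc, hdcd⟩ := exists_mem_diagSet_mul_mul_eq hd
  have hdefect : k + d - (k + d) * c * (k + d) = k - k * (c * (k + d)) - d * c * k :=
    add_sub_mul_mul_add_eq (Q := ColFinQ F) hdcd
  obtain ⟨u, hu, hdu⟩ := exists_finite_range_mul_mul_eq (k := k + d - (k + d) * c * (k + d)) <| by
    rw [hdefect]
    exact finite_range_sub (finite_range_sub hk (finite_range_mul_right hk _))
      (finite_range_mul_left _ hk)
  let A : OMearaR F := ⟨k + d, ha⟩
  let C : OMearaR F := ⟨c, diagSet_subset_OMearaR hc⟩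
  let U : OMearaR F := ⟨u, finRankSet_subset_OMearaR hu⟩
  exact ⟨C + U - C * A * U - U * A * C + C * A * U * A * C,
    Subtype.ext (mul_mul_eq_of_sub_mul_mul hdu).symm⟩

theorem essentialInSet_mul_finRankSet (f : ColFinQ F) :
    EssentialInSet (OMearaR F) {y | ∃ k ∈ finRankSet F, y = f * k}
      {y | ∃ r ∈ OMearaR F, y = f * r} := by
  refine ⟨fun y ⟨k, hk, hy⟩ => ⟨k, finRankSet_subset_OMearaR hk, hy⟩, ?_⟩
  rintro X hX hXB ⟨x, hxX, hx0⟩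
  obtain ⟨m, hm⟩ := exists_apply_single_ne_zero hx0
  let P : ColFinQ F := (lapply m).smulRight (single m 1)
  have hP : Module.Finite F (range P) := finite_range_smulRight _ _
  obtain ⟨r, -, rfl⟩ := hXB hxX
  refine ⟨f * r * P, hX.2.2.2 _ hxX P (finRankSet_subset_OMearaR hP),
    ⟨r * P, finite_range_mul_left r hP, mul_assoc f r P⟩, fun h0 => hm ?_⟩
  simpa [P] using congr($h0 (single m 1))

noncomputable def evenToOdd : ColFinQ F :=
  lsum F fun n => if Even n then lsingle (n + 1) else 0

noncomputable def oddToEven : ColFinQ F :=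
  lsum F fun n => if Odd n then lsingle (n - 1) else 0

theorem evenToOdd_single (n : ℕ) :
    evenToOdd (F := F) (single n 1) = if Even n then Finsupp.single (n + 1) 1 else 0 := by
  simp only [evenToOdd, Finsupp.lsum_single]
  split <;> simp

theorem oddToEven_single (n : ℕ) :
    oddToEven (F := F) (single n 1) = if Odd n then Finsupp.single (n - 1) 1 else 0 := by
  simp only [oddToEven, Finsupp.lsum_single]
  split <;> simp

theorem oddToEven_mul_evenToOdd : oddToEven * evenToOdd = diagE F := colFinQ_ext fun n => by
  rw [Module.End.mul_apply, evenToOdd_single, diagE_single]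
  by_cases h : Even n
  · simp [h, oddToEven_single, h.add_one]
  · simp [h]

theorem evenToOdd_mul_oddToEven : evenToOdd * oddToEven = 1 - diagE F := colFinQ_ext fun n => by
  rw [Module.End.mul_apply, oddToEven_single, LinearMap.sub_apply, one_apply, diagE_single]
  by_cases h : Odd n
  · obtain ⟨m, rfl⟩ := h
    simp [evenToOdd_single]
  · simp [h, Nat.not_odd_iff_even.1 h]

theorem evenToOdd_mul_diagE : evenToOdd * diagE F = evenToOdd := colFinQ_ext fun n => by
  rw [Module.End.mul_apply, diagE_single]
  by_cases h : Even n
  · simp [h]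
  · simp [h, evenToOdd_single]

theorem rIsoSet_diagE : RIsoSet (OMearaR F)
    {y | ∃ k ∈ finRankSet F, y = diagE F * k} {y | ∃ k ∈ finRankSet F, y = (1 - diagE F) * k} := by
  refine rIsoSet_mul_of_mul_eq _ ?_ oddToEven_mul_evenToOdd evenToOdd_mul_oddToEven
    evenToOdd_mul_diagE
  exact fun q _ hk => finite_range_mul_left q hk

noncomputable def doubleIndex : ColFinQ F := lmapDomain F F (2 * ·)

theorem doubleIndex_injective : Function.Injective (doubleIndex (F := F)) :=
  mapDomain_injective fun a b h => by omega

theorem diagE_mul_doubleIndex : diagE F * doubleIndex = doubleIndex := colFinQ_ext fun n => by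
  simp [doubleIndex, diagE_single]

theorem not_finite_finsupp_nat : ¬ Module.Finite F (ℕ →₀ F) :=
  Module.not_finite_of_infinite_basis Finsupp.basisSingleOne

theorem exists_ne_zero_diagE_apply_eq_self_and_apply_eq_zero {s : ColFinQ F}
    (hs : Module.Finite F (range s)) : ∃ v ≠ 0, diagE F v = v ∧ s v = 0 := by
  obtain ⟨w, hw0, hw⟩ := exists_ne_zero_apply_eq_zero not_finite_finsupp_nat (s * doubleIndex)
    (finite_range_mul_right hs _)
  exact ⟨doubleIndex w, (map_ne_zero_iff _ doubleIndex_injective).2 hw0,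
    congr($diagE_mul_doubleIndex w), hw⟩

theorem finite_range_one_sub_diagE_mul_mul_diagE {r : ColFinQ F} (hr : r ∈ OMearaR F) :
    Module.Finite F (range ((1 - diagE F) * r * diagE F)) := by
  obtain ⟨k, hk, d, hd, rfl⟩ := mem_OMearaR.1 hr
  have hde : (1 - diagE F) * d * diagE F = 0 := by
    rw [mul_assoc, ← (commute_of_mem_diagSet diagE_mem_diagSet hd).eq, ← mul_assoc,
      IsIdempotentElem.one_sub_mul_self (R := ColFinQ F) isIdempotentElem_diagE, zero_mul]
  rw [mul_add, add_mul, hde, add_zero]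
  exact finite_range_mul_right (finite_range_mul_left _ hk) _

theorem not_exists_injective_hom_diagE :
    ¬∃ φ : ColFinQ F → ColFinQ F,
        Set.MapsTo φ {y : ColFinQ F | ∃ r ∈ OMearaR F, y = diagE F * r}
          {y : ColFinQ F | ∃ r ∈ OMearaR F, y = (1 - diagE F) * r} ∧
        Set.InjOn φ {y : ColFinQ F | ∃ r ∈ OMearaR F, y = diagE F * r} ∧
        (∀ a ∈ {y : ColFinQ F | ∃ r ∈ OMearaR F, y = diagE F * r},
          ∀ b ∈ {y : ColFinQ F | ∃ r ∈ OMearaR F, y = diagE F * r}, φ (a + b) = φ a + φ b) ∧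
        (∀ a ∈ {y : ColFinQ F | ∃ r ∈ OMearaR F, y = diagE F * r},
          ∀ r ∈ OMearaR F, φ (a * r) = φ a * r) := by
  rintro ⟨φ, hmaps, hinj, -, hmul⟩
  have he : diagE F ∈ {y | ∃ r ∈ OMearaR F, y = diagE F * r} :=
    ⟨diagE F, diagE_mem_OMearaR, isIdempotentElem_diagE.eq.symm⟩
  have h0 : (0 : ColFinQ F) ∈ {y | ∃ r ∈ OMearaR F, y = diagE F * r} :=
    ⟨0, zero_mem _, (mul_zero _).symm⟩
  have hφ0 : φ 0 = 0 := by simpa using hmul 0 h0 0 (zero_mem _)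
  have hφe : Module.Finite F (range (φ (diagE F))) := by
    obtain ⟨r, hr, hφr⟩ := hmaps he
    have : φ (diagE F) = (1 - diagE F) * r * diagE F := by
      rw [← hφr, ← hmul _ he _ diagE_mem_OMearaR, isIdempotentElem_diagE.eq]
    rw [this]
    exact finite_range_one_sub_diagE_mul_mul_diagE hr
  obtain ⟨v, hv0, hev, hφv⟩ := exists_ne_zero_diagE_apply_eq_self_and_apply_eq_zero hφe
  let p : ColFinQ F := (lapply 0).smulRight v
  have hpR : p ∈ OMearaR F := finRankSet_subset_OMearaR (finite_range_smulRight _ _)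
  have hep : diagE F * p = 0 := hinj ⟨p, hpR, rfl⟩ h0 <| by
    rw [hmul _ he p hpR, hφ0]
    exact LinearMap.ext fun x => by simp [p, hφv]
  exact hv0 (by simpa [p, hev] using congr($hep (single 0 1)))

end OMeara

/-- **O'Meara's example.** Let `F` be a field, `Q` the ring of column-finite `ℕ×ℕ`
matrices over `F` (the endomorphism ring of `ℕ →₀ F`), `K = socle Q` the finite-rank
endomorphisms, `D` the diagonal matrices and `R = K + D`.  With `e = diag(1,0,1,0,…)`:
`R` is von Neumann regular; the right ideals `I = eK` and `I' = (1-e)K` of `R` are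
isomorphic as right `R`-modules; their essential closures in `R` are `eR = eQ ∩ R` and
`(1-e)R = (1-e)Q ∩ R`; and there is no injective homomorphism of right `R`-modules
from `eR` into `(1-e)R`. -/
theorem OMeara_example :
    IsVonNeumannRegularRing ↥(OMearaR F) ∧
    RIsoSet (OMearaR F)
      {y : ColFinQ F | ∃ k ∈ finRankSet F, y = diagE F * k}
      {y : ColFinQ F | ∃ k ∈ finRankSet F, y = (1 - diagE F) * k} ∧
    (EssentialInSet (OMearaR F)
        {y : ColFinQ F | ∃ k ∈ finRankSet F, y = diagE F * k}
        {y : ColFinQ F | ∃ r ∈ OMearaR F, y = diagE F * r} ∧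
      IsClosedInSet (OMearaR F) {y : ColFinQ F | ∃ r ∈ OMearaR F, y = diagE F * r} ∧
      {y : ColFinQ F | ∃ r ∈ OMearaR F, y = diagE F * r} =
        {y : ColFinQ F | ∃ q : ColFinQ F, y = diagE F * q} ∩ (OMearaR F : Set (ColFinQ F))) ∧
    (EssentialInSet (OMearaR F)
        {y : ColFinQ F | ∃ k ∈ finRankSet F, y = (1 - diagE F) * k}
        {y : ColFinQ F | ∃ r ∈ OMearaR F, y = (1 - diagE F) * r} ∧
      IsClosedInSet (OMearaR F) {y : ColFinQ F | ∃ r ∈ OMearaR F, y = (1 - diagE F) * r} ∧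
      {y : ColFinQ F | ∃ r ∈ OMearaR F, y = (1 - diagE F) * r} =
        {y : ColFinQ F | ∃ q : ColFinQ F, y = (1 - diagE F) * q} ∩
          (OMearaR F : Set (ColFinQ F))) ∧
    ¬∃ φ : ColFinQ F → ColFinQ F,
        Set.MapsTo φ {y : ColFinQ F | ∃ r ∈ OMearaR F, y = diagE F * r}
          {y : ColFinQ F | ∃ r ∈ OMearaR F, y = (1 - diagE F) * r} ∧
        Set.InjOn φ {y : ColFinQ F | ∃ r ∈ OMearaR F, y = diagE F * r} ∧
        (∀ a ∈ {y : ColFinQ F | ∃ r ∈ OMearaR F, y = diagE F * r},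
          ∀ b ∈ {y : ColFinQ F | ∃ r ∈ OMearaR F, y = diagE F * r}, φ (a + b) = φ a + φ b) ∧
        (∀ a ∈ {y : ColFinQ F | ∃ r ∈ OMearaR F, y = diagE F * r},
          ∀ r ∈ OMearaR F, φ (a * r) = φ a * r) := by
  have he : IsIdempotentElem (diagE F) := isIdempotentElem_diagE
  have he' : IsIdempotentElem (1 - diagE F) := IsIdempotentElem.one_sub (R := ColFinQ F) he
  have heR : diagE F ∈ OMearaR F := diagE_mem_OMearaR
  have he'R : 1 - diagE F ∈ OMearaR F := (OMearaR F).sub_mem (OMearaR F).one_mem heR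
  exact ⟨isVonNeumannRegularRing_OMearaR, rIsoSet_diagE,
    ⟨essentialInSet_mul_finRankSet _, isClosedInSet_mul_of_isIdempotentElem _ he,
      mul_subring_eq_inter_of_isIdempotentElem _ heR he⟩,
    ⟨essentialInSet_mul_finRankSet _, isClosedInSet_mul_of_isIdempotentElem _ he',
      mul_subring_eq_inter_of_isIdempotentElem _ he'R he'⟩,
    not_exists_injective_hom_diagE⟩
end
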